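/- arXiv:1606.01193 — 2 statements merged into one kernel-verified Lean document; each statement's English description precedes it below -/
import Mathlib

section
/- Let X be a locally connected continuum and suppose that for every homeomorphism h of F₄(X) onto itself, h([X]⁴) = [X]⁴, where [X]⁴ denotes the set of subsets of X with exactly 4 points. Then for every homeomorphism h of F₄(X) onto itself, h([X]²) ∩ [X]³ = ∅, where [X]ᵏ denotes the set of subsets of X with exactly k points. -/
open TopologicalSpace

/-- The `n`-th symmetric product `Fₙ(X)`: nonempty subsets of `X` with at most `n` points,
topologized as a subspace of the hyperspace of nonempty compact sets with the Hausdorff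
metric (which induces the Vietoris topology). -/
def SymmProd (X : Type*) [MetricSpace X] (n : ℕ) : Type _ :=
  {A : NonemptyCompacts X // (A : Set X).Finite ∧ (A : Set X).ncard ≤ n}

noncomputable instance {X : Type*} [MetricSpace X] {n : ℕ} : MetricSpace (SymmProd X n) := by
  unfold SymmProd; infer_instance

def SymmProd.toSet {X : Type*} [MetricSpace X] {n : ℕ} (A : SymmProd X n) : Set X := A.1

open Metric Set

set_option maxHeartbeats 1000000

section CC
variable {α : Type*} [TopologicalSpace α] [T1Space α] [LocallyConnectedSpace α]

lemma closure_ccIn {U : Set α} (hU : IsOpen U) (hUc : IsPreconnected U) {x₀ y : α}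
    (hx₀ : x₀ ∈ U) (hy : y ∈ U) (hne : y ≠ x₀) :
    x₀ ∈ closure (connectedComponentIn (U \ {x₀}) y) := by
  set F := U \ {x₀} with hF
  have hFo : IsOpen F := hU.sdiff isClosed_singleton
  have hyF : y ∈ F := ⟨hy, hne⟩
  set K := connectedComponentIn F y with hK
  by_contra hcl
  have hKopen : IsOpen K := hFo.connectedComponentIn
  have hKF : closure K ∩ F ⊆ K := by
    rintro w ⟨hwc, hwF⟩
    have hL : IsOpen (connectedComponentIn F w) := hFo.connectedComponentIn
    obtain ⟨k, hkL, hkK⟩ :=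
      mem_closure_iff.1 hwc _ hL (mem_connectedComponentIn hwF)
    have h1 := connectedComponentIn_eq hkL
    have h2 := connectedComponentIn_eq hkK
    rw [hK, h2, ← h1]
    exact mem_connectedComponentIn hwF
  have hsep := hUc K (U \ closure K) hKopen (hU.sdiff isClosed_closure) ?_ ?_ ?_
  · obtain ⟨w, _, hwK, hw2⟩ := hsep
    exact hw2.2 (subset_closure hwK)
  · intro w hw
    by_cases hwc : w ∈ closure K
    · rcases eq_or_ne w x₀ with rfl | hwx
      · exact absurd hwc hcl
      · exact Or.inl (hKF ⟨hwc, hw, hwx⟩)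
    · exact Or.inr ⟨hw, hwc⟩
  · exact ⟨y, hy, mem_connectedComponentIn hyF⟩
  · exact ⟨x₀, hx₀, hx₀, hcl⟩

end CC

namespace SP

variable {X : Type*} [MetricSpace X]

lemma sp_ext {n : ℕ} {A B : SymmProd X n} (h : A.toSet = B.toSet) : A = B :=
  Subtype.ext (NonemptyCompacts.ext h)

lemma sp_dist_eq {n : ℕ} (A B : SymmProd X n) :
    dist A B = hausdorffDist A.toSet B.toSet := rfl

lemma sp_fin {n : ℕ} (A : SymmProd X n) : A.toSet.Finite := A.2.1

lemma sp_ne {n : ℕ} (A : SymmProd X n) : A.toSet.Nonempty := A.1.nonempty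

lemma sp_card_le {n : ℕ} (A : SymmProd X n) : A.toSet.ncard ≤ n := A.2.2

lemma sp_edist_ne_top {n : ℕ} (A B : SymmProd X n) :
    EMetric.hausdorffEdist A.toSet B.toSet ≠ ⊤ :=
  Metric.hausdorffEdist_ne_top_of_nonempty_of_bounded A.1.nonempty B.1.nonempty
    A.1.isCompact.isBounded B.1.isCompact.isBounded

lemma near_of_dist_lt {n : ℕ} {A B : SymmProd X n} {r : ℝ} (h : dist A B < r)
    {y : X} (hy : y ∈ A.toSet) : ∃ z ∈ B.toSet, dist y z < r :=
  Metric.exists_dist_lt_of_hausdorffDist_lt hy (by rw [sp_dist_eq] at h; exact h)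
    (sp_edist_ne_top A B)

lemma near_of_dist_lt' {n : ℕ} {A B : SymmProd X n} {r : ℝ} (h : dist A B < r)
    {y : X} (hy : y ∈ B.toSet) : ∃ z ∈ A.toSet, dist z y < r :=
  Metric.exists_dist_lt_of_hausdorffDist_lt' hy (by rw [sp_dist_eq] at h; exact h)
    (sp_edist_ne_top A B)

lemma sp_dist_le {n : ℕ} {A B : SymmProd X n} {r : ℝ} (h0 : 0 ≤ r)
    (h1 : ∀ y ∈ A.toSet, ∃ z ∈ B.toSet, dist y z ≤ r)
    (h2 : ∀ z ∈ B.toSet, ∃ y ∈ A.toSet, dist z y ≤ r) : dist A B ≤ r := by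
  rw [sp_dist_eq]
  exact Metric.hausdorffDist_le_of_mem_dist h0 h1 (fun z hz => by
    obtain ⟨y, hy, hd⟩ := h2 z hz; exact ⟨y, hy, hd⟩)

/-- canonical 4-point (multi)set -/
noncomputable def mk4 (a b c d : X) : SymmProd X 4 :=
  ⟨⟨⟨{a, b, c, d}, ((Set.finite_singleton d).insert c |>.insert b |>.insert a).isCompact⟩, by simp⟩,
    (Set.finite_singleton d).insert c |>.insert b |>.insert a, by
      calc ({a,b,c,d} : Set X).ncard ≤ ({b,c,d} : Set X).ncard + 1 := Set.ncard_insert_le _ _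
        _ ≤ (({c,d} : Set X).ncard + 1) + 1 := by
            exact Nat.add_le_add_right (Set.ncard_insert_le _ _) 1
        _ ≤ ((({d} : Set X).ncard + 1) + 1) + 1 := by
            exact Nat.add_le_add_right (Nat.add_le_add_right (Set.ncard_insert_le _ _) 1) 1
        _ ≤ 4 := by simp⟩

@[simp] lemma mk4_toSet (a b c d : X) : (mk4 a b c d).toSet = {a, b, c, d} := rfl

lemma mk4_eq {a b c d a' b' c' d' : X} (h : ({a,b,c,d} : Set X) = {a',b',c',d'}) :
    mk4 a b c d = mk4 a' b' c' d' := sp_ext (by simpa using h)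

lemma dist_mk4_le (a b c d a' b' c' d' : X) :
    dist (mk4 a b c d) (mk4 a' b' c' d') ≤
      max (max (dist a a') (dist b b')) (max (dist c c') (dist d d')) := by
  apply sp_dist_le
  · positivity
  · intro y hy
    simp only [mk4_toSet, Set.mem_insert_iff, Set.mem_singleton_iff] at hy
    rcases hy with rfl | rfl | rfl | rfl
    · exact ⟨a', by simp, le_trans (le_max_left _ _) (le_max_left _ _)⟩
    · exact ⟨b', by simp, le_trans (le_max_right _ _) (le_max_left _ _)⟩
    · exact ⟨c', by simp, le_trans (le_max_left _ _) (le_max_right _ _)⟩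
    · exact ⟨d', by simp, le_trans (le_max_right _ _) (le_max_right _ _)⟩
  · intro z hz
    simp only [mk4_toSet, Set.mem_insert_iff, Set.mem_singleton_iff] at hz
    rcases hz with rfl | rfl | rfl | rfl
    · exact ⟨a, by simp, by rw [dist_comm]; exact le_trans (le_max_left _ _) (le_max_left _ _)⟩
    · exact ⟨b, by simp, by rw [dist_comm]; exact le_trans (le_max_right _ _) (le_max_left _ _)⟩
    · exact ⟨c, by simp, by rw [dist_comm]; exact le_trans (le_max_left _ _) (le_max_right _ _)⟩
    · exact ⟨d, by simp, by rw [dist_comm]; exact le_trans (le_max_right _ _) (le_max_right _ _)⟩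

lemma continuous_mk4_pair (c d : X) :
    Continuous (fun p : X × X => mk4 p.1 p.2 c d) := by
  rw [Metric.continuous_iff]
  intro p ε hε
  refine ⟨ε, hε, fun q hq => lt_of_le_of_lt ((dist_mk4_le _ _ _ _ _ _ _ _).trans ?_) hq⟩
  rw [Prod.dist_eq, dist_self, dist_self, max_self]
  exact max_le le_rfl (le_max_of_le_left dist_nonneg)

lemma lip_aux {w w' a b c : X} :
    dist (mk4 a b w c) (mk4 a b w' c) ≤ dist w w' := by
  have h := dist_mk4_le a b w c a b w' c
  simp only [dist_self, max_self] at h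
  exact h.trans (max_le dist_nonneg (max_le le_rfl dist_nonneg))

lemma continuous_mk4_slot3 (a b c : X) : Continuous (fun w : X => mk4 a b w c) := by
  rw [Metric.continuous_iff]
  intro w ε hε
  exact ⟨ε, hε, fun w' h => lt_of_le_of_lt lip_aux h⟩

lemma continuous_mk4_slot4 (a b c : X) : Continuous (fun w : X => mk4 a b c w) := by
  rw [Metric.continuous_iff]
  intro w ε hε
  refine ⟨ε, hε, fun w' h => lt_of_le_of_lt ?_ h⟩
  have h := dist_mk4_le a b c w' a b c w
  simp only [dist_self, max_self] at h
  exact h.trans (max_le dist_nonneg (max_le dist_nonneg le_rfl))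

lemma continuous_mk4_slot2 (a b c : X) : Continuous (fun w : X => mk4 a w b c) := by
  rw [Metric.continuous_iff]
  intro w ε hε
  refine ⟨ε, hε, fun w' h => lt_of_le_of_lt ?_ h⟩
  have h := dist_mk4_le a w' b c a w b c
  simp only [dist_self, max_self] at h
  exact h.trans (max_le (max_le dist_nonneg le_rfl) dist_nonneg)

lemma ncard4_eq {a b c d : X} (hab : a ≠ b) (hac : a ≠ c) (had : a ≠ d)
    (hbc : b ≠ c) (hbd : b ≠ d) (hcd : c ≠ d) : ({a,b,c,d} : Set X).ncard = 4 := by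
  rw [Set.ncard_insert_of_notMem (by simp [hab, hac, had]) (Set.toFinite _),
    Set.ncard_insert_of_notMem (by simp [hbc, hbd]) (Set.toFinite _),
    Set.ncard_insert_of_notMem (by simp [hcd]) (Set.toFinite _),
    Set.ncard_singleton]

section Pair
variable {X : Type*} [MetricSpace X] [LocallyConnectedSpace X]

lemma mk4_comm (x y t1 t2 : X) : mk4 x y t1 t2 = mk4 y x t1 t2 :=
  mk4_eq (Set.insert_comm x y _)

lemma pairs_preconnected {U : Set X} (hU : IsOpen U) (hUc : IsPreconnected U) (t1 t2 : X) :
    IsPreconnected ((fun p : X × X => mk4 p.1 p.2 t1 t2) ''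
      {p : X × X | p.1 ∈ U ∧ p.2 ∈ U ∧ p.1 ≠ p.2}) := by
  set CU := (fun p : X × X => mk4 p.1 p.2 t1 t2) ''
      {p : X × X | p.1 ∈ U ∧ p.2 ∈ U ∧ p.1 ≠ p.2} with hCU
  have mem_CU : ∀ {x y : X}, x ∈ U → y ∈ U → x ≠ y → mk4 x y t1 t2 ∈ CU :=
    fun {x y} hx hy hxy => ⟨(x, y), ⟨hx, hy, hxy⟩, rfl⟩
  intro u v hu hv hcover hneu hnev
  by_contra hempty
  rw [Set.not_nonempty_iff_eq_empty] at hempty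
  have hnot : ∀ S ∈ CU, ¬(S ∈ u ∧ S ∈ v) := by
    intro S hS hSuv
    have : S ∈ CU ∩ (u ∩ v) := ⟨hS, hSuv.1, hSuv.2⟩
    rw [hempty] at this
    exact this
  -- slice lemma
  have slice : ∀ x ∈ U, ∀ N : Set X, N ⊆ U \ {x} → IsPreconnected N →
      ∀ y ∈ N, ∀ z ∈ N, mk4 x y t1 t2 ∈ u → mk4 x z t1 t2 ∈ u := by
    intro x hx N hNsub hNpre y hyN z hzN hyu
    by_contra hzu
    have hTpre : IsPreconnected ((fun w => mk4 x w t1 t2) '' N) :=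
      hNpre.image _ (continuous_mk4_slot2 x t1 t2).continuousOn
    have hTsub : (fun w => mk4 x w t1 t2) '' N ⊆ CU := by
      rintro S ⟨w, hwN, rfl⟩
      exact mem_CU hx (hNsub hwN).1 (Ne.symm (hNsub hwN).2)
    have hzv : mk4 x z t1 t2 ∈ v := by
      rcases hcover (hTsub ⟨z, hzN, rfl⟩) with h | h
      · exact absurd h hzu
      · exact h
    obtain ⟨S, hST, hSu, hSv⟩ :=
      hTpre u v hu hv (fun S hS => hcover (hTsub hS))
        ⟨_, ⟨y, hyN, rfl⟩, hyu⟩ ⟨_, ⟨z, hzN, rfl⟩, hzv⟩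
    exact hnot S (hTsub hST) ⟨hSu, hSv⟩
  by_cases hex : ∃ x₀ ∈ U, ∃ y ∈ U, ∃ z ∈ U, y ≠ x₀ ∧ z ≠ x₀ ∧
      mk4 x₀ y t1 t2 ∈ u ∧ mk4 x₀ z t1 t2 ∉ u
  · obtain ⟨x₀, hx₀, y, hy, z, hz, hyx₀, hzx₀, hyu, hznu⟩ := hex
    set F := U \ {x₀} with hF
    have hyF : y ∈ F := ⟨hy, hyx₀⟩
    have hzF : z ∈ F := ⟨hz, hzx₀⟩
    set K := connectedComponentIn F y with hK
    set K' := connectedComponentIn F z with hK'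
    have hKsub : K ⊆ F := connectedComponentIn_subset _ _
    have hK'sub : K' ⊆ F := connectedComponentIn_subset _ _
    have hzK : z ∉ K := fun hzK =>
      hznu (slice x₀ hx₀ K hKsub isPreconnected_connectedComponentIn
        y (mem_connectedComponentIn hyF) z hzK hyu)
    have hyK' : y ∉ K' := by
      intro hyK'
      have h2 := connectedComponentIn_eq hyK'   -- ccIn F z = ccIn F y
      exact hzK (by rw [hK, ← h2]; exact mem_connectedComponentIn hzF)
    have hKcl : x₀ ∈ closure K := closure_ccIn hU hUc hx₀ hy hyx₀
    have hK'cl : x₀ ∈ closure K' := closure_ccIn hU hUc hx₀ hz hzx₀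
    have hyz : y ≠ z := by
      rintro rfl
      exact hznu hyu
    -- N₁ = K ∪ {x₀} is preconnected and avoids z
    have hN₁pre : IsPreconnected (K ∪ {x₀}) :=
      isPreconnected_connectedComponentIn.subset_closure subset_union_left
        (Set.union_subset subset_closure (by simpa using hKcl))
    have hN₁sub : K ∪ {x₀} ⊆ U \ {z} := by
      rintro w (hw | rfl)
      · refine ⟨(hKsub hw).1, fun h => ?_⟩
        rw [Set.mem_singleton_iff] at h
        exact hzK (h ▸ hw)
      · refine ⟨hx₀, fun h => ?_⟩
        rw [Set.mem_singleton_iff] at h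
        exact hzx₀ h.symm
    have hN₂pre : IsPreconnected (K' ∪ {x₀}) :=
      isPreconnected_connectedComponentIn.subset_closure subset_union_left
        (Set.union_subset subset_closure (by simpa using hK'cl))
    have hN₂sub : K' ∪ {x₀} ⊆ U \ {y} := by
      rintro w (hw | rfl)
      · refine ⟨(hK'sub hw).1, fun h => ?_⟩
        rw [Set.mem_singleton_iff] at h
        exact hyK' (h ▸ hw)
      · refine ⟨hx₀, fun h => ?_⟩
        rw [Set.mem_singleton_iff] at h
        exact hyx₀ h.symm
    -- from center y : mk4 y z ∈ u
    have hyzu : mk4 y z t1 t2 ∈ u := by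
      have hx₀u : mk4 y x₀ t1 t2 ∈ u := by
        rw [← mk4_comm]; exact hyu
      exact slice y hy (K' ∪ {x₀}) hN₂sub hN₂pre x₀ (Or.inr rfl)
        z (Or.inl (mem_connectedComponentIn hzF)) hx₀u
    -- from center z : mk4 z y ∉ u hence ∈ v; but mk4 z y = mk4 y z
    have hzyu : mk4 z y t1 t2 ∉ u := by
      intro hzyu
      have := slice z hz (K ∪ {x₀}) hN₁sub hN₁pre y (Or.inl (mem_connectedComponentIn hyF))
        x₀ (Or.inr rfl) hzyu
      rw [← mk4_comm] at this
      exact hznu this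
    rw [mk4_comm] at hyzu
    exact hzyu hyzu
  · push_neg at hex
    have all_same : ∀ x ∈ U, ∀ y ∈ U, y ≠ x → ∀ x' ∈ U, ∀ y' ∈ U, y' ≠ x' →
        mk4 x y t1 t2 ∈ u → mk4 x' y' t1 t2 ∈ u := by
      intro x hx y hy hyx x' hx' y' hy' hy'x' hxyu
      rcases eq_or_ne x' x with rfl | hne
      · exact hex x' hx y hy y' hy' hyx hy'x' hxyu
      · have h1 : mk4 x x' t1 t2 ∈ u := hex x hx y hy x' hx' hyx hne hxyu
        have h2 : mk4 x' x t1 t2 ∈ u := by rw [← mk4_comm]; exact h1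
        exact hex x' hx' x hx y' hy' hne.symm hy'x' h2
    obtain ⟨Su, ⟨pu, hpu, rfl⟩, hSuu⟩ := hneu
    obtain ⟨Sv, ⟨pv, hpv, rfl⟩, hSvv⟩ := hnev
    have hSvu : mk4 pv.1 pv.2 t1 t2 ∈ u :=
      all_same pu.1 hpu.1 pu.2 hpu.2.1 (Ne.symm hpu.2.2) pv.1 hpv.1 pv.2 hpv.2.1
        (Ne.symm hpv.2.2) hSuu
    exact hnot _ (mem_CU hpv.1 hpv.2.1 hpv.2.2) ⟨hSvu, hSvv⟩
end Pair


section ConnectT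
variable {X : Type*} [MetricSpace X] [LocallyConnectedSpace X] [ConnectedSpace X]

lemma connectT {U1 U2 U3 : Set X} (hU1o : IsOpen U1) (hU1c : IsPreconnected U1)
    (hU2c : IsPreconnected U2) (hU3c : IsPreconnected U3)
    (h12 : Disjoint U1 U2) (h13 : Disjoint U1 U3) (h23 : Disjoint U2 U3)
    {x1 x2 x3 x4 q1 q2 q3 : X}
    (hx1 : x1 ∈ U1) (hx2 : x2 ∈ U1) (hx12 : x1 ≠ x2) (hx3 : x3 ∈ U2) (hx4 : x4 ∈ U3)
    (hq1 : q1 ∈ U1) (hq2 : q2 ∈ U2) (hq3 : q3 ∈ U3) :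
    ∃ T : Set (SymmProd X 4), IsPreconnected T ∧ mk4 q1 q2 q3 q3 ∈ T ∧
      mk4 x1 x2 x3 x4 ∈ T ∧
      ∀ S ∈ T, S = mk4 q1 q2 q3 q3 ∨
        ((∀ y ∈ S.toSet, y ∈ U1 ∨ y ∈ U2 ∨ y ∈ U3) ∧ (S.toSet ∩ U1).Nonempty ∧
          (S.toSet ∩ U2).Nonempty ∧ (S.toSet ∩ U3).Nonempty ∧ S.toSet.ncard = 4) := by
  obtain ⟨N, hNU1, hNo, hq1N, hNc⟩ :=
    (locallyConnectedSpace_iff_subsets_isOpen_isConnected.mp inferInstance) q1 U1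
      (hU1o.mem_nhds hq1)
  -- a second point in N
  have hexu : ∃ u', u' ∈ N ∧ u' ≠ q1 := by
    by_contra hco
    push_neg at hco
    have hNeq : N = {q1} := Set.eq_singleton_iff_unique_mem.mpr ⟨hq1N, hco⟩
    have hclop : IsClopen ({q1} : Set X) := ⟨isClosed_singleton, hNeq ▸ hNo⟩
    rcases isClopen_iff.mp hclop with h | h
    · exact absurd h (Set.singleton_ne_empty q1)
    · have : x3 ∈ ({q1} : Set X) := h ▸ Set.mem_univ x3
      rw [Set.mem_singleton_iff] at this
      exact h12.ne_of_mem hq1 hx3 this.symm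
  obtain ⟨u', hu'N, hu'ne⟩ := hexu
  have hu'U1 : u' ∈ U1 := hNU1 hu'N
  set W := connectedComponentIn (N \ {q1}) u' with hW
  have hWpre : IsPreconnected W := isPreconnected_connectedComponentIn
  have hWsub : W ⊆ N \ {q1} := connectedComponentIn_subset _ _
  have hu'W : u' ∈ W := mem_connectedComponentIn ⟨hu'N, hu'ne⟩
  have hWcl : q1 ∈ closure W := closure_ccIn hNo hNc.isPreconnected hq1N hu'N hu'ne
  set Q := mk4 q1 q2 q3 q3 with hQ
  set T1 := (fun p : X × X => mk4 p.1 p.2 x3 x4) ''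
      {p : X × X | p.1 ∈ U1 ∧ p.2 ∈ U1 ∧ p.1 ≠ p.2} with hT1def
  set T2 := (fun w => mk4 q1 u' w x4) '' U2 with hT2def
  set T3 := (fun w => mk4 q1 u' q2 w) '' U3 with hT3def
  set T4 := (fun w => mk4 q1 w q2 q3) '' W ∪ {Q} with hT4def
  have hT1 : IsPreconnected T1 := pairs_preconnected hU1o hU1c x3 x4
  have hT2 : IsPreconnected T2 :=
    hU2c.image _ (continuous_mk4_slot3 q1 u' x4).continuousOn
  have hT3 : IsPreconnected T3 :=
    hU3c.image _ (continuous_mk4_slot4 q1 u' q2).continuousOn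
  have hT4img : IsPreconnected ((fun w => mk4 q1 w q2 q3) '' W) :=
    hWpre.image _ (continuous_mk4_slot2 q1 q2 q3).continuousOn
  have hQcl : Q ∈ closure ((fun w => mk4 q1 w q2 q3) '' W) := by
    rw [Metric.mem_closure_iff]
    intro ε hε
    obtain ⟨w, hwW, hwd⟩ := Metric.mem_closure_iff.mp hWcl ε hε
    refine ⟨mk4 q1 w q2 q3, ⟨w, hwW, rfl⟩, lt_of_le_of_lt ?_ hwd⟩
    apply sp_dist_le dist_nonneg
    · intro y hy
      simp only [hQ, mk4_toSet, Set.mem_insert_iff, Set.mem_singleton_iff] at hy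
      rcases hy with rfl | rfl | rfl | rfl
      · exact ⟨y, by simp, by rw [dist_self]; exact dist_nonneg⟩
      · exact ⟨y, by simp, by rw [dist_self]; exact dist_nonneg⟩
      · exact ⟨y, by simp, by rw [dist_self]; exact dist_nonneg⟩
      · exact ⟨y, by simp, by rw [dist_self]; exact dist_nonneg⟩
    · intro z hz
      simp only [mk4_toSet, Set.mem_insert_iff, Set.mem_singleton_iff] at hz
      rcases hz with rfl | rfl | rfl | rfl
      · exact ⟨z, by simp [hQ], by rw [dist_self]; exact dist_nonneg⟩
      · exact ⟨q1, by simp [hQ], by rw [dist_comm]⟩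
      · exact ⟨z, by simp [hQ], by rw [dist_self]; exact dist_nonneg⟩
      · exact ⟨z, by simp [hQ], by rw [dist_self]; exact dist_nonneg⟩
  have hT4 : IsPreconnected T4 :=
    hT4img.subset_closure subset_union_left
      (Set.union_subset subset_closure (by simpa using hQcl))
  -- glue
  have he1T1 : mk4 q1 u' x3 x4 ∈ T1 := ⟨(q1, u'), ⟨hq1, hu'U1, hu'ne.symm⟩, rfl⟩
  have he1T2 : mk4 q1 u' x3 x4 ∈ T2 := ⟨x3, hx3, rfl⟩
  have he2T2 : mk4 q1 u' q2 x4 ∈ T2 := ⟨q2, hq2, rfl⟩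
  have he2T3 : mk4 q1 u' q2 x4 ∈ T3 := ⟨x4, hx4, rfl⟩
  have he3T3 : mk4 q1 u' q2 q3 ∈ T3 := ⟨q3, hq3, rfl⟩
  have he3T4 : mk4 q1 u' q2 q3 ∈ T4 := Or.inl ⟨u', hu'W, rfl⟩
  have hT12 : IsPreconnected (T1 ∪ T2) :=
    IsPreconnected.union _ he1T1 he1T2 hT1 hT2
  have hT123 : IsPreconnected (T1 ∪ T2 ∪ T3) :=
    IsPreconnected.union _ (Or.inr he2T2) he2T3 hT12 hT3
  have hTfull : IsPreconnected (T1 ∪ T2 ∪ T3 ∪ T4) :=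
    IsPreconnected.union _ (Or.inr he3T3) he3T4 hT123 hT4
  refine ⟨T1 ∪ T2 ∪ T3 ∪ T4, hTfull, Or.inr (Or.inr rfl), Or.inl (Or.inl (Or.inl
    ⟨(x1, x2), ⟨hx1, hx2, hx12⟩, rfl⟩)), ?_⟩
  rintro S ((( ⟨p, hp, rfl⟩ | ⟨w, hwU2, rfl⟩) | ⟨w, hwU3, rfl⟩) | (⟨w, hwW, rfl⟩ | hSQ))
  · refine Or.inr ⟨?_, ⟨p.1, by simp, hp.1⟩, ⟨x3, by simp, hx3⟩, ⟨x4, by simp, hx4⟩, ?_⟩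
    · intro y hy
      simp only [mk4_toSet, Set.mem_insert_iff, Set.mem_singleton_iff] at hy
      rcases hy with rfl | rfl | rfl | rfl
      · exact Or.inl hp.1
      · exact Or.inl hp.2.1
      · exact Or.inr (Or.inl hx3)
      · exact Or.inr (Or.inr hx4)
    · rw [mk4_toSet]
      exact ncard4_eq hp.2.2 (h12.ne_of_mem hp.1 hx3) (h13.ne_of_mem hp.1 hx4)
        (h12.ne_of_mem hp.2.1 hx3) (h13.ne_of_mem hp.2.1 hx4) (h23.ne_of_mem hx3 hx4)
  · refine Or.inr ⟨?_, ⟨q1, by simp, hq1⟩, ⟨w, by simp, hwU2⟩, ⟨x4, by simp, hx4⟩, ?_⟩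
    · intro y hy
      simp only [mk4_toSet, Set.mem_insert_iff, Set.mem_singleton_iff] at hy
      rcases hy with rfl | rfl | rfl | rfl
      · exact Or.inl hq1
      · exact Or.inl hu'U1
      · exact Or.inr (Or.inl hwU2)
      · exact Or.inr (Or.inr hx4)
    · rw [mk4_toSet]
      exact ncard4_eq hu'ne.symm (h12.ne_of_mem hq1 hwU2) (h13.ne_of_mem hq1 hx4)
        (h12.ne_of_mem hu'U1 hwU2) (h13.ne_of_mem hu'U1 hx4) (h23.ne_of_mem hwU2 hx4)
  · refine Or.inr ⟨?_, ⟨q1, by simp, hq1⟩, ⟨q2, by simp, hq2⟩, ⟨w, by simp, hwU3⟩, ?_⟩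
    · intro y hy
      simp only [mk4_toSet, Set.mem_insert_iff, Set.mem_singleton_iff] at hy
      rcases hy with rfl | rfl | rfl | rfl
      · exact Or.inl hq1
      · exact Or.inl hu'U1
      · exact Or.inr (Or.inl hq2)
      · exact Or.inr (Or.inr hwU3)
    · rw [mk4_toSet]
      exact ncard4_eq hu'ne.symm (h12.ne_of_mem hq1 hq2) (h13.ne_of_mem hq1 hwU3)
        (h12.ne_of_mem hu'U1 hq2) (h13.ne_of_mem hu'U1 hwU3) (h23.ne_of_mem hq2 hwU3)
  · have hwU1 : w ∈ U1 := hNU1 (hWsub hwW).1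
    have hwne : w ≠ q1 := (hWsub hwW).2
    refine Or.inr ⟨?_, ⟨q1, by simp, hq1⟩, ⟨q2, by simp, hq2⟩, ⟨q3, by simp, hq3⟩, ?_⟩
    · intro y hy
      simp only [mk4_toSet, Set.mem_insert_iff, Set.mem_singleton_iff] at hy
      rcases hy with rfl | rfl | rfl | rfl
      · exact Or.inl hq1
      · exact Or.inl hwU1
      · exact Or.inr (Or.inl hq2)
      · exact Or.inr (Or.inr hq3)
    · rw [mk4_toSet]
      exact ncard4_eq hwne.symm (h12.ne_of_mem hq1 hq2) (h13.ne_of_mem hq1 hq3)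
        (h12.ne_of_mem hwU1 hq2) (h13.ne_of_mem hwU1 hq3) (h23.ne_of_mem hq2 hq3)
  · exact Or.inl hSQ
end ConnectT


section Good
open Topology
variable {X : Type*} [MetricSpace X]

def D4 (X : Type*) [MetricSpace X] : Set (SymmProd X 4) := {S | S.toSet.ncard = 4}

def Good (y : SymmProd X 4) : Prop :=
  ∀ V ∈ 𝓝 y, ∃ V₀ ∈ 𝓝 y, V₀ ⊆ V ∧ ∀ q ∈ V₀, q ∉ D4 X → ∀ x ∈ V₀, x ∈ D4 X →
    ∃ T : Set (SymmProd X 4), IsPreconnected T ∧ T ⊆ (V ∩ D4 X) ∪ {q} ∧ q ∈ T ∧ x ∈ T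

variable [LocallyConnectedSpace X] [ConnectedSpace X]

lemma good_of_three {B : SymmProd X 4} (hB : B.toSet.ncard = 3) : Good B := by
  intro V hV
  obtain ⟨p1, p2, p3, h12, h13, h23, hBset⟩ := Set.ncard_eq_three.mp hB
  obtain ⟨ε0, hε0, hball⟩ := Metric.mem_nhds_iff.mp hV
  set m := min (dist p1 p2) (min (dist p1 p3) (dist p2 p3)) with hm
  have hm0 : 0 < m := lt_min (dist_pos.2 h12) (lt_min (dist_pos.2 h13) (dist_pos.2 h23))
  set ε := min ε0 m with hεdef
  have hε : 0 < ε := lt_min hε0 hm0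
  have hεε0 : ε ≤ ε0 := min_le_left _ _
  have hεm : ε ≤ m := min_le_right _ _
  have hsep : ∀ pa pb : X, m ≤ dist pa pb → ∀ y z : X,
      dist y pa < ε / 2 → dist z pb < ε / 2 → y ≠ z := by
    intro pa pb hmab y z hy hz hyz
    subst hyz
    have : dist pa pb < ε := by
      calc dist pa pb ≤ dist pa y + dist y pb := dist_triangle _ _ _
        _ < ε / 2 + ε / 2 := by
            rw [dist_comm pa y]; exact add_lt_add hy hz
        _ = ε := by ring
    exact absurd (lt_of_le_of_lt (le_trans hεm hmab) this) (lt_irrefl _)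
  have hloc := locallyConnectedSpace_iff_subsets_isOpen_isConnected.mp
    (inferInstance : LocallyConnectedSpace X)
  obtain ⟨U1, hU1b, hU1o, hp1U, hU1c⟩ :=
    hloc p1 (Metric.ball p1 (ε / 2)) (Metric.ball_mem_nhds _ (by positivity))
  obtain ⟨U2, hU2b, hU2o, hp2U, hU2c⟩ :=
    hloc p2 (Metric.ball p2 (ε / 2)) (Metric.ball_mem_nhds _ (by positivity))
  obtain ⟨U3, hU3b, hU3o, hp3U, hU3c⟩ :=
    hloc p3 (Metric.ball p3 (ε / 2)) (Metric.ball_mem_nhds _ (by positivity))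
  obtain ⟨δ1, hδ1, hδ1sub⟩ := Metric.isOpen_iff.mp hU1o p1 hp1U
  obtain ⟨δ2, hδ2, hδ2sub⟩ := Metric.isOpen_iff.mp hU2o p2 hp2U
  obtain ⟨δ3, hδ3, hδ3sub⟩ := Metric.isOpen_iff.mp hU3o p3 hp3U
  set δ := min (min δ1 (min δ2 δ3)) (ε / 2) with hδdef
  have hδ : 0 < δ := lt_min (lt_min hδ1 (lt_min hδ2 hδ3)) (by positivity)
  have hδε : δ ≤ ε / 2 := min_le_right _ _
  have hballU1 : Metric.ball p1 δ ⊆ U1 :=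
    le_trans (Metric.ball_subset_ball (le_trans (min_le_left _ _) (min_le_left _ _))) hδ1sub
  have hballU2 : Metric.ball p2 δ ⊆ U2 :=
    le_trans (Metric.ball_subset_ball (le_trans (min_le_left _ _)
      (le_trans (min_le_right _ _) (min_le_left _ _)))) hδ2sub
  have hballU3 : Metric.ball p3 δ ⊆ U3 :=
    le_trans (Metric.ball_subset_ball (le_trans (min_le_left _ _)
      (le_trans (min_le_right _ _) (min_le_right _ _)))) hδ3sub
  -- U's are inside the ε/2-balls
  have hU1ball : ∀ y ∈ U1, dist y p1 < ε / 2 := fun y hy => Metric.mem_ball.mp (hU1b hy)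
  have hU2ball : ∀ y ∈ U2, dist y p2 < ε / 2 := fun y hy => Metric.mem_ball.mp (hU2b hy)
  have hU3ball : ∀ y ∈ U3, dist y p3 < ε / 2 := fun y hy => Metric.mem_ball.mp (hU3b hy)
  have hUd12 : Disjoint U1 U2 := Set.disjoint_left.mpr fun {y} hy1 hy2 =>
    hsep p1 p2 (min_le_left _ _) y y (hU1ball y hy1) (hU2ball y hy2) rfl
  have hUd13 : Disjoint U1 U3 := Set.disjoint_left.mpr fun {y} hy1 hy2 =>
    hsep p1 p3 (le_trans (min_le_right _ _) (min_le_left _ _)) y y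
      (hU1ball y hy1) (hU3ball y hy2) rfl
  have hUd23 : Disjoint U2 U3 := Set.disjoint_left.mpr fun {y} hy1 hy2 =>
    hsep p2 p3 (le_trans (min_le_right _ _) (min_le_right _ _)) y y
      (hU2ball y hy1) (hU3ball y hy2) rfl
  refine ⟨Metric.ball B δ, Metric.ball_mem_nhds _ hδ, ?_, ?_⟩
  · intro S hS
    apply hball
    exact Metric.mem_ball.mpr (lt_of_lt_of_le (Metric.mem_ball.mp hS)
      (le_trans hδε (le_trans (by linarith) hεε0)))
  intro q hqV₀ hqD x hxV₀ hxD
  have hqB : dist q B < δ := Metric.mem_ball.mp hqV₀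
  have hxB : dist x B < δ := Metric.mem_ball.mp hxV₀
  -- the points of q
  obtain ⟨z1, hz1q, hz1⟩ : ∃ z ∈ q.toSet, dist z p1 < δ := by
    obtain ⟨z, hz, hd⟩ := near_of_dist_lt' hqB (by rw [hBset]; simp : p1 ∈ B.toSet)
    exact ⟨z, hz, hd⟩
  obtain ⟨z2, hz2q, hz2⟩ : ∃ z ∈ q.toSet, dist z p2 < δ := by
    obtain ⟨z, hz, hd⟩ := near_of_dist_lt' hqB (by rw [hBset]; simp : p2 ∈ B.toSet)
    exact ⟨z, hz, hd⟩
  obtain ⟨z3, hz3q, hz3⟩ : ∃ z ∈ q.toSet, dist z p3 < δ := by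
    obtain ⟨z, hz, hd⟩ := near_of_dist_lt' hqB (by rw [hBset]; simp : p3 ∈ B.toSet)
    exact ⟨z, hz, hd⟩
  have hz1U : z1 ∈ U1 := hballU1 (Metric.mem_ball.mpr hz1)
  have hz2U : z2 ∈ U2 := hballU2 (Metric.mem_ball.mpr hz2)
  have hz3U : z3 ∈ U3 := hballU3 (Metric.mem_ball.mpr hz3)
  have hz12 : z1 ≠ z2 := hsep p1 p2 (min_le_left _ _) z1 z2
    (lt_of_lt_of_le hz1 hδε) (lt_of_lt_of_le hz2 hδε)
  have hz13 : z1 ≠ z3 := hsep p1 p3 (le_trans (min_le_right _ _) (min_le_left _ _)) z1 z3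
    (lt_of_lt_of_le hz1 hδε) (lt_of_lt_of_le hz3 hδε)
  have hz23 : z2 ≠ z3 := hsep p2 p3 (le_trans (min_le_right _ _) (min_le_right _ _)) z2 z3
    (lt_of_lt_of_le hz2 hδε) (lt_of_lt_of_le hz3 hδε)
  have hqcard : q.toSet.ncard ≤ 3 := by
    have h4 := sp_card_le q
    have : q.toSet.ncard ≠ 4 := hqD
    omega
  have hqsub : q.toSet ⊆ {z1, z2, z3} := by
    intro z hz
    by_contra hzn
    simp only [Set.mem_insert_iff, Set.mem_singleton_iff, not_or] at hzn
    have hsub4 : ({z, z1, z2, z3} : Set X) ⊆ q.toSet := by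
      intro w hw
      simp only [Set.mem_insert_iff, Set.mem_singleton_iff] at hw
      rcases hw with rfl | rfl | rfl | rfl <;> assumption
    have h4 : ({z, z1, z2, z3} : Set X).ncard = 4 :=
      ncard4_eq hzn.1 hzn.2.1 hzn.2.2 hz12 hz13 hz23
    have := Set.ncard_le_ncard hsub4 (sp_fin q)
    omega
  have hqeq : q = mk4 z1 z2 z3 z3 := by
    apply sp_ext
    rw [mk4_toSet]
    apply Set.Subset.antisymm
    · intro z hz
      have := hqsub hz
      simp only [Set.mem_insert_iff, Set.mem_singleton_iff] at this ⊢
      tauto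
    · intro z hz
      simp only [Set.mem_insert_iff, Set.mem_singleton_iff] at hz
      rcases hz with rfl | rfl | rfl | rfl <;> assumption
  -- the points of x
  set S1 := x.toSet ∩ Metric.ball p1 δ with hS1def
  set S2 := x.toSet ∩ Metric.ball p2 δ with hS2def
  set S3 := x.toSet ∩ Metric.ball p3 δ with hS3def
  have hS1fin : S1.Finite := (sp_fin x).subset Set.inter_subset_left
  have hS2fin : S2.Finite := (sp_fin x).subset Set.inter_subset_left
  have hS3fin : S3.Finite := (sp_fin x).subset Set.inter_subset_left
  have hcov : x.toSet = S1 ∪ S2 ∪ S3 := by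
    apply Set.Subset.antisymm
    · intro z hz
      obtain ⟨w, hw, hd⟩ := near_of_dist_lt hxB hz
      rw [hBset] at hw
      simp only [Set.mem_insert_iff, Set.mem_singleton_iff] at hw
      rcases hw with rfl | rfl | rfl
      · exact Or.inl (Or.inl ⟨hz, Metric.mem_ball.mpr hd⟩)
      · exact Or.inl (Or.inr ⟨hz, Metric.mem_ball.mpr hd⟩)
      · exact Or.inr ⟨hz, Metric.mem_ball.mpr hd⟩
    · intro z hz
      rcases hz with (h | h) | h <;> exact h.1
  have hdisj12 : Disjoint S1 S2 := Set.disjoint_left.mpr fun {y} hy1 hy2 =>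
    hsep p1 p2 (min_le_left _ _) y y
      (lt_of_lt_of_le (Metric.mem_ball.mp hy1.2) hδε)
      (lt_of_lt_of_le (Metric.mem_ball.mp hy2.2) hδε) rfl
  have hdisj13 : Disjoint S1 S3 := Set.disjoint_left.mpr fun {y} hy1 hy2 =>
    hsep p1 p3 (le_trans (min_le_right _ _) (min_le_left _ _)) y y
      (lt_of_lt_of_le (Metric.mem_ball.mp hy1.2) hδε)
      (lt_of_lt_of_le (Metric.mem_ball.mp hy2.2) hδε) rfl
  have hdisj23 : Disjoint S2 S3 := Set.disjoint_left.mpr fun {y} hy1 hy2 =>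
    hsep p2 p3 (le_trans (min_le_right _ _) (min_le_right _ _)) y y
      (lt_of_lt_of_le (Metric.mem_ball.mp hy1.2) hδε)
      (lt_of_lt_of_le (Metric.mem_ball.mp hy2.2) hδε) rfl
  have hsum : S1.ncard + S2.ncard + S3.ncard = 4 := by
    have hu12 : (S1 ∪ S2).ncard = S1.ncard + S2.ncard := Set.ncard_union_eq hdisj12 hS1fin hS2fin
    have hu123 : (S1 ∪ S2 ∪ S3).ncard = (S1 ∪ S2).ncard + S3.ncard :=
      Set.ncard_union_eq (Set.disjoint_union_left.mpr ⟨hdisj13, hdisj23⟩)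
        (hS1fin.union hS2fin) hS3fin
    have hx4 : x.toSet.ncard = 4 := hxD
    rw [hcov] at hx4
    omega
  have hS1ne : 1 ≤ S1.ncard := by
    obtain ⟨z, hz, hd⟩ := near_of_dist_lt' hxB (by rw [hBset]; simp : p1 ∈ B.toSet)
    exact Set.ncard_pos hS1fin |>.mpr ⟨z, hz, Metric.mem_ball.mpr hd⟩
  have hS2ne : 1 ≤ S2.ncard := by
    obtain ⟨z, hz, hd⟩ := near_of_dist_lt' hxB (by rw [hBset]; simp : p2 ∈ B.toSet)
    exact Set.ncard_pos hS2fin |>.mpr ⟨z, hz, Metric.mem_ball.mpr hd⟩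
  have hS3ne : 1 ≤ S3.ncard := by
    obtain ⟨z, hz, hd⟩ := near_of_dist_lt' hxB (by rw [hBset]; simp : p3 ∈ B.toSet)
    exact Set.ncard_pos hS3fin |>.mpr ⟨z, hz, Metric.mem_ball.mpr hd⟩
  -- a helper to conclude in all three cases
  have finish : ∀ T : Set (SymmProd X 4), IsPreconnected T → q ∈ T → x ∈ T →
      (∀ S ∈ T, S = q ∨
        ((∀ y ∈ S.toSet, y ∈ U1 ∨ y ∈ U2 ∨ y ∈ U3) ∧ (S.toSet ∩ U1).Nonempty ∧
          (S.toSet ∩ U2).Nonempty ∧ (S.toSet ∩ U3).Nonempty ∧ S.toSet.ncard = 4)) →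
      ∃ T : Set (SymmProd X 4), IsPreconnected T ∧ T ⊆ (V ∩ D4 X) ∪ {q} ∧ q ∈ T ∧ x ∈ T := by
    intro T hTpre hqT hxT hmem
    refine ⟨T, hTpre, ?_, hqT, hxT⟩
    intro S hS
    rcases hmem S hS with rfl | ⟨hsub, hne1, hne2, hne3, hcard⟩
    · exact Or.inr rfl
    · refine Or.inl ⟨?_, hcard⟩
      apply hball
      rw [Metric.mem_ball]
      have hd : dist S B ≤ ε / 2 := by
        apply sp_dist_le (by positivity)
        · intro y hy
          rcases hsub y hy with h | h | h
          · exact ⟨p1, by rw [hBset]; simp, le_of_lt (hU1ball y h)⟩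
          · exact ⟨p2, by rw [hBset]; simp, le_of_lt (hU2ball y h)⟩
          · exact ⟨p3, by rw [hBset]; simp, le_of_lt (hU3ball y h)⟩
        · intro w hw
          rw [hBset] at hw
          simp only [Set.mem_insert_iff, Set.mem_singleton_iff] at hw
          rcases hw with rfl | rfl | rfl
          · obtain ⟨y, hyS, hyU⟩ := hne1
            exact ⟨y, hyS, by rw [dist_comm]; exact le_of_lt (hU1ball y hyU)⟩
          · obtain ⟨y, hyS, hyU⟩ := hne2
            exact ⟨y, hyS, by rw [dist_comm]; exact le_of_lt (hU2ball y hyU)⟩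
          · obtain ⟨y, hyS, hyU⟩ := hne3
            exact ⟨y, hyS, by rw [dist_comm]; exact le_of_lt (hU3ball y hyU)⟩
      calc dist S B ≤ ε / 2 := hd
        _ < ε := by linarith
        _ ≤ ε0 := hεε0
  have hpattern : (S1.ncard = 2 ∧ S2.ncard = 1 ∧ S3.ncard = 1) ∨
      (S1.ncard = 1 ∧ S2.ncard = 2 ∧ S3.ncard = 1) ∨
      (S1.ncard = 1 ∧ S2.ncard = 1 ∧ S3.ncard = 2) := by
    omega
  rcases hpattern with ⟨hn1, hn2, hn3⟩ | ⟨hn1, hn2, hn3⟩ | ⟨hn1, hn2, hn3⟩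
  · obtain ⟨a, b, hab, hS1⟩ := Set.ncard_eq_two.mp hn1
    obtain ⟨c, hS2⟩ := Set.ncard_eq_one.mp hn2
    obtain ⟨d, hS3⟩ := Set.ncard_eq_one.mp hn3
    have haS : a ∈ S1 := by rw [hS1]; simp
    have haU : a ∈ U1 := hballU1 haS.2
    have hbS : b ∈ S1 := by rw [hS1]; simp
    have hbU : b ∈ U1 := hballU1 hbS.2
    have hcS : c ∈ S2 := by rw [hS2]; simp
    have hcU : c ∈ U2 := hballU2 hcS.2
    have hdS : d ∈ S3 := by rw [hS3]; simp
    have hdU : d ∈ U3 := hballU3 hdS.2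
    have hxeq : x = mk4 a b c d := by
      apply sp_ext
      rw [mk4_toSet, hcov, hS1, hS2, hS3]
      ext y
      simp only [Set.mem_union, Set.mem_insert_iff, Set.mem_singleton_iff]
      tauto
    obtain ⟨T, hTpre, hQT, hxT, hTmem⟩ :=
      connectT hU1o hU1c.isPreconnected hU2c.isPreconnected hU3c.isPreconnected
        hUd12 hUd13 hUd23 haU hbU hab hcU hdU hz1U hz2U hz3U
    refine finish T hTpre (by rw [hqeq]; exact hQT) (by rw [hxeq]; exact hxT) ?_
    intro S hS
    rcases hTmem S hS with hSQ | hreg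
    · exact Or.inl (by rw [hqeq]; exact hSQ)
    · exact Or.inr hreg
  · obtain ⟨a, b, hab, hS2⟩ := Set.ncard_eq_two.mp hn2
    obtain ⟨c, hS1⟩ := Set.ncard_eq_one.mp hn1
    obtain ⟨d, hS3⟩ := Set.ncard_eq_one.mp hn3
    have haS : a ∈ S2 := by rw [hS2]; simp
    have haU : a ∈ U2 := hballU2 haS.2
    have hbS : b ∈ S2 := by rw [hS2]; simp
    have hbU : b ∈ U2 := hballU2 hbS.2
    have hcS : c ∈ S1 := by rw [hS1]; simp
    have hcU : c ∈ U1 := hballU1 hcS.2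
    have hdS : d ∈ S3 := by rw [hS3]; simp
    have hdU : d ∈ U3 := hballU3 hdS.2
    have hxeq : x = mk4 a b c d := by
      apply sp_ext
      rw [mk4_toSet, hcov, hS1, hS2, hS3]
      ext y
      simp only [Set.mem_union, Set.mem_insert_iff, Set.mem_singleton_iff]
      tauto
    obtain ⟨T, hTpre, hQT, hxT, hTmem⟩ :=
      connectT hU2o hU2c.isPreconnected hU1c.isPreconnected hU3c.isPreconnected
        hUd12.symm hUd23 hUd13 haU hbU hab hcU hdU hz2U hz1U hz3U
    have hQq : mk4 z2 z1 z3 z3 = q := by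
      rw [hqeq]
      apply mk4_eq
      ext y
      simp only [Set.mem_insert_iff, Set.mem_singleton_iff]
      tauto
    refine finish T hTpre (by rw [← hQq]; exact hQT) (by rw [hxeq]; exact hxT) ?_
    intro S hS
    rcases hTmem S hS with hSQ | ⟨hsub, hne1, hne2, hne3, hcard⟩
    · exact Or.inl (by rw [← hQq]; exact hSQ)
    · exact Or.inr ⟨fun y hy => by rcases hsub y hy with h | h | h <;> tauto,
        hne2, hne1, hne3, hcard⟩
  · obtain ⟨a, b, hab, hS3⟩ := Set.ncard_eq_two.mp hn3
    obtain ⟨c, hS1⟩ := Set.ncard_eq_one.mp hn1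
    obtain ⟨d, hS2⟩ := Set.ncard_eq_one.mp hn2
    have haS : a ∈ S3 := by rw [hS3]; simp
    have haU : a ∈ U3 := hballU3 haS.2
    have hbS : b ∈ S3 := by rw [hS3]; simp
    have hbU : b ∈ U3 := hballU3 hbS.2
    have hcS : c ∈ S1 := by rw [hS1]; simp
    have hcU : c ∈ U1 := hballU1 hcS.2
    have hdS : d ∈ S2 := by rw [hS2]; simp
    have hdU : d ∈ U2 := hballU2 hdS.2
    have hxeq : x = mk4 a b c d := by
      apply sp_ext
      rw [mk4_toSet, hcov, hS1, hS2, hS3]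
      ext y
      simp only [Set.mem_union, Set.mem_insert_iff, Set.mem_singleton_iff]
      tauto
    obtain ⟨T, hTpre, hQT, hxT, hTmem⟩ :=
      connectT hU3o hU3c.isPreconnected hU1c.isPreconnected hU2c.isPreconnected
        hUd13.symm hUd23.symm hUd12 haU hbU hab hcU hdU hz3U hz1U hz2U
    have hQq : mk4 z3 z1 z2 z2 = q := by
      rw [hqeq]
      apply mk4_eq
      ext y
      simp only [Set.mem_insert_iff, Set.mem_singleton_iff]
      tauto
    refine finish T hTpre (by rw [← hQq]; exact hQT) (by rw [hxeq]; exact hxT) ?_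
    intro S hS
    rcases hTmem S hS with hSQ | ⟨hsub, hne1, hne2, hne3, hcard⟩
    · exact Or.inl (by rw [← hQq]; exact hSQ)
    · exact Or.inr ⟨fun y hy => by rcases hsub y hy with h | h | h <;> tauto,
        hne2, hne3, hne1, hcard⟩
end Good


section Claim2
open Topology
variable {X : Type*} [MetricSpace X]

lemma ncard5_eq {a b c d e : X} (hab : a ≠ b) (hac : a ≠ c) (had : a ≠ d) (hae : a ≠ e)
    (hbc : b ≠ c) (hbd : b ≠ d) (hbe : b ≠ e) (hcd : c ≠ d) (hce : c ≠ e) (hde : d ≠ e) :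
    ({a, b, c, d, e} : Set X).ncard = 5 := by
  rw [Set.ncard_insert_of_notMem (by simp [hab, hac, had, hae]) (Set.toFinite _),
    ncard4_eq hbc hbd hbe hcd hce hde]

lemma ncard3_le (a b c : X) : ({a, b, c} : Set X).ncard ≤ 3 := by
  calc ({a, b, c} : Set X).ncard ≤ ({b, c} : Set X).ncard + 1 := Set.ncard_insert_le _ _
    _ ≤ (({c} : Set X).ncard + 1) + 1 :=
        Nat.add_le_add_right (Set.ncard_insert_le _ _) 1
    _ ≤ 3 := by simp

lemma open_two_near (a : X) (r : ℝ) :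
    IsOpen {S : SymmProd X 4 | ∃ y1 ∈ S.toSet, ∃ y2 ∈ S.toSet,
      y1 ≠ y2 ∧ dist y1 a < r ∧ dist y2 a < r} := by
  rw [Metric.isOpen_iff]
  rintro S ⟨y1, hy1, y2, hy2, hne, hd1, hd2⟩
  have h12 : 0 < dist y1 y2 := dist_pos.2 hne
  refine ⟨min (dist y1 y2 / 3) (min (r - dist y1 a) (r - dist y2 a)),
    lt_min (by positivity) (lt_min (by linarith) (by linarith)), fun S' hS' => ?_⟩
  rw [Metric.mem_ball] at hS'
  obtain ⟨z1, hz1, hdz1⟩ := near_of_dist_lt' hS' hy1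
  obtain ⟨z2, hz2, hdz2⟩ := near_of_dist_lt' hS' hy2
  have hρ1 : dist z1 y1 < dist y1 y2 / 3 := lt_of_lt_of_le hdz1 (min_le_left _ _)
  have hρ2 : dist z2 y2 < dist y1 y2 / 3 := lt_of_lt_of_le hdz2 (min_le_left _ _)
  refine ⟨z1, hz1, z2, hz2, ?_, ?_, ?_⟩
  · intro hz
    subst hz
    have t := dist_triangle y1 z1 y2
    have e1 : dist y1 z1 = dist z1 y1 := dist_comm _ _
    linarith
  · have : dist z1 y1 < r - dist y1 a :=
      lt_of_lt_of_le hdz1 (le_trans (min_le_right _ _) (min_le_left _ _))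
    calc dist z1 a ≤ dist z1 y1 + dist y1 a := dist_triangle _ _ _
      _ < r := by linarith
  · have : dist z2 y2 < r - dist y2 a :=
      lt_of_lt_of_le hdz2 (le_trans (min_le_right _ _) (min_le_right _ _))
    calc dist z2 a ≤ dist z2 y2 + dist y2 a := dist_triangle _ _ _
      _ < r := by linarith

lemma open_three_near (b : X) (r : ℝ) :
    IsOpen {S : SymmProd X 4 | ∃ y1 ∈ S.toSet, ∃ y2 ∈ S.toSet, ∃ y3 ∈ S.toSet,
      y1 ≠ y2 ∧ y1 ≠ y3 ∧ y2 ≠ y3 ∧ dist y1 b < r ∧ dist y2 b < r ∧ dist y3 b < r} := by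
  rw [Metric.isOpen_iff]
  rintro S ⟨y1, hy1, y2, hy2, y3, hy3, h12, h13, h23, hd1, hd2, hd3⟩
  have hp12 : 0 < dist y1 y2 := dist_pos.2 h12
  have hp13 : 0 < dist y1 y3 := dist_pos.2 h13
  have hp23 : 0 < dist y2 y3 := dist_pos.2 h23
  set g := min (dist y1 y2) (min (dist y1 y3) (dist y2 y3)) with hg
  have hg0 : 0 < g := lt_min hp12 (lt_min hp13 hp23)
  refine ⟨min (g / 3) (min (r - dist y1 b) (min (r - dist y2 b) (r - dist y3 b))),
    lt_min (by positivity) (lt_min (by linarith) (lt_min (by linarith) (by linarith))),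
    fun S' hS' => ?_⟩
  rw [Metric.mem_ball] at hS'
  obtain ⟨z1, hz1, hdz1⟩ := near_of_dist_lt' hS' hy1
  obtain ⟨z2, hz2, hdz2⟩ := near_of_dist_lt' hS' hy2
  obtain ⟨z3, hz3, hdz3⟩ := near_of_dist_lt' hS' hy3
  have hρ1 : dist z1 y1 < g / 3 := lt_of_lt_of_le hdz1 (min_le_left _ _)
  have hρ2 : dist z2 y2 < g / 3 := lt_of_lt_of_le hdz2 (min_le_left _ _)
  have hρ3 : dist z3 y3 < g / 3 := lt_of_lt_of_le hdz3 (min_le_left _ _)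
  have hgen : ∀ w1 w2 u1 u2 : X, g ≤ dist u1 u2 → dist w1 u1 < g / 3 →
      dist w2 u2 < g / 3 → w1 ≠ w2 := by
    intro w1 w2 u1 u2 hgle hw1 hw2 heq
    subst heq
    have t := dist_triangle u1 w1 u2
    have e1 : dist u1 w1 = dist w1 u1 := dist_comm _ _
    have e2 : dist w1 u2 = dist u2 w1 := dist_comm _ _
    have e3 : dist u2 w1 = dist w1 u2 := dist_comm _ _
    linarith
  refine ⟨z1, hz1, z2, hz2, z3, hz3,
    hgen z1 z2 y1 y2 (min_le_left _ _) hρ1 hρ2,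
    hgen z1 z3 y1 y3 (le_trans (min_le_right _ _) (min_le_left _ _)) hρ1 hρ3,
    hgen z2 z3 y2 y3 (le_trans (min_le_right _ _) (min_le_right _ _)) hρ2 hρ3, ?_, ?_, ?_⟩
  · have : dist z1 y1 < r - dist y1 b :=
      lt_of_lt_of_le hdz1 (le_trans (min_le_right _ _) (min_le_left _ _))
    calc dist z1 b ≤ dist z1 y1 + dist y1 b := dist_triangle _ _ _
      _ < r := by linarith
  · have : dist z2 y2 < r - dist y2 b := lt_of_lt_of_le hdz2
      (le_trans (min_le_right _ _) (le_trans (min_le_right _ _) (min_le_left _ _)))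
    calc dist z2 b ≤ dist z2 y2 + dist y2 b := dist_triangle _ _ _
      _ < r := by linarith
  · have : dist z3 y3 < r - dist y3 b := lt_of_lt_of_le hdz3
      (le_trans (min_le_right _ _) (le_trans (min_le_right _ _) (min_le_right _ _)))
    calc dist z3 b ≤ dist z3 y3 + dist y3 b := dist_triangle _ _ _
      _ < r := by linarith

variable [ConnectedSpace X]

lemma exists_ne_near {c c' : X} (hcc' : c ≠ c') (x : X) {r : ℝ} (hr : 0 < r) :
    ∃ z : X, z ≠ x ∧ dist z x < r := by
  by_contra hco
  push_neg at hco
  have hsub : Metric.ball x r ⊆ {x} := by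
    intro z hz
    rw [Metric.mem_ball] at hz
    rw [Set.mem_singleton_iff]
    by_contra hne
    exact absurd hz (not_lt.mpr (hco z hne))
  have hopen : IsOpen ({x} : Set X) := by
    rw [Metric.isOpen_iff]
    intro y hy
    rw [Set.mem_singleton_iff] at hy
    subst hy
    exact ⟨r, hr, hsub⟩
  rcases isClopen_iff.mp ⟨isClosed_singleton, hopen⟩ with h | h
  · exact absurd h (Set.singleton_ne_empty x)
  · apply hcc'
    have h1 : c ∈ ({x} : Set X) := h ▸ Set.mem_univ c
    have h2 : c' ∈ ({x} : Set X) := h ▸ Set.mem_univ c'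
    rw [Set.mem_singleton_iff] at h1 h2
    rw [h1, h2]

lemma not_good_of_two {A : SymmProd X 4} (hA : A.toSet.ncard = 2) : ¬ Good A := by
  obtain ⟨a, b, hab, hAset⟩ := Set.ncard_eq_two.mp hA
  have hab5 : dist a b = 5 * (dist a b / 5) := by ring
  set ε := dist a b / 5 with hεdef
  have hε : 0 < ε := by
    have := dist_pos.2 hab
    positivity
  intro hGood
  obtain ⟨V₀, hV₀n, hV₀V, H⟩ := hGood (Metric.ball A ε) (Metric.ball_mem_nhds _ hε)
  obtain ⟨δ0, hδ0, hδsub⟩ := Metric.mem_nhds_iff.mp hV₀n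
  set δ := min δ0 ε with hδdef
  have hδ : 0 < δ := lt_min hδ0 hε
  have hδδ0 : δ ≤ δ0 := min_le_left _ _
  have hδε : δ ≤ ε := min_le_right _ _
  obtain ⟨a2, ha2ne, ha2d⟩ := exists_ne_near hab a hδ
  obtain ⟨b2, hb2ne, hb2d⟩ := exists_ne_near hab b hδ
  have hb2pos : 0 < dist b2 b := dist_pos.2 hb2ne
  obtain ⟨b3, hb3ne, hb3d⟩ := exists_ne_near hab b (lt_min hδ hb2pos)
  have hb3δ : dist b3 b < δ := lt_of_lt_of_le hb3d (min_le_left _ _)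
  have hb23 : b3 ≠ b2 := by
    intro h
    subst h
    exact absurd (lt_of_lt_of_le hb3d (min_le_right _ _)) (lt_irrefl _)
  -- q and x
  set q := mk4 a a2 b b with hqdef
  set x := mk4 a b b2 b3 with hxdef
  have hmemA : ∀ w : X, w ∈ A.toSet ↔ (w = a ∨ w = b) := by
    intro w
    rw [hAset]
    simp
  have hqV₀ : q ∈ V₀ := by
    apply hδsub
    rw [Metric.mem_ball]
    have : dist q A ≤ dist a2 a := by
      apply sp_dist_le dist_nonneg
      · intro y hy
        simp only [hqdef, mk4_toSet, Set.mem_insert_iff, Set.mem_singleton_iff] at hy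
        rcases hy with h | h | h | h
        · exact ⟨a, (hmemA a).mpr (Or.inl rfl), by rw [h, dist_self]; exact dist_nonneg⟩
        · exact ⟨a, (hmemA a).mpr (Or.inl rfl), by rw [h]⟩
        · exact ⟨b, (hmemA b).mpr (Or.inr rfl), by rw [h, dist_self]; exact dist_nonneg⟩
        · exact ⟨b, (hmemA b).mpr (Or.inr rfl), by rw [h, dist_self]; exact dist_nonneg⟩
      · intro z hz
        rcases (hmemA z).mp hz with h | h
        · exact ⟨a, by simp [hqdef], by rw [h, dist_self]; exact dist_nonneg⟩
        · exact ⟨b, by simp [hqdef], by rw [h, dist_self]; exact dist_nonneg⟩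
    exact lt_of_le_of_lt this (lt_of_lt_of_le ha2d hδδ0)
  have hqD : q ∉ D4 X := by
    intro hc
    have h1 : q.toSet = {a, a2, b} := by
      rw [hqdef, mk4_toSet]
      ext y
      simp only [Set.mem_insert_iff, Set.mem_singleton_iff]
      tauto
    have h2 : q.toSet.ncard ≤ 3 := by rw [h1]; exact ncard3_le a a2 b
    have h3 : q.toSet.ncard = 4 := hc
    omega
  have hbne2 : ∀ w : X, dist w b < ε → w ≠ a := by
    intro w hw heq
    subst heq
    rw [hεdef] at hw
    have hd := dist_pos.2 hab
    linarith [hw]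
  have hxV₀ : x ∈ V₀ := by
    apply hδsub
    rw [Metric.mem_ball]
    have : dist x A ≤ max (dist b2 b) (dist b3 b) := by
      apply sp_dist_le (le_max_of_le_left dist_nonneg)
      · intro y hy
        simp only [hxdef, mk4_toSet, Set.mem_insert_iff, Set.mem_singleton_iff] at hy
        rcases hy with h | h | h | h
        · exact ⟨a, (hmemA a).mpr (Or.inl rfl), by rw [h, dist_self]; exact le_max_of_le_left dist_nonneg⟩
        · exact ⟨b, (hmemA b).mpr (Or.inr rfl), by rw [h, dist_self]; exact le_max_of_le_left dist_nonneg⟩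
        · exact ⟨b, (hmemA b).mpr (Or.inr rfl), by rw [h]; exact le_max_left _ _⟩
        · exact ⟨b, (hmemA b).mpr (Or.inr rfl), by rw [h]; exact le_max_right _ _⟩
      · intro z hz
        rcases (hmemA z).mp hz with h | h
        · exact ⟨a, by simp [hxdef], by rw [h, dist_self]; exact le_max_of_le_left dist_nonneg⟩
        · exact ⟨b, by simp [hxdef], by rw [h, dist_self]; exact le_max_of_le_left dist_nonneg⟩
    exact lt_of_le_of_lt this (lt_of_lt_of_le (max_lt hb2d hb3δ) hδδ0)
  have hxD : x ∈ D4 X := by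
    have : x.toSet.ncard = 4 := by
      rw [hxdef, mk4_toSet]
      exact ncard4_eq hab (Ne.symm (hbne2 b2 (lt_of_lt_of_le hb2d hδε)))
        (Ne.symm (hbne2 b3 (lt_of_lt_of_le hb3δ hδε))) (Ne.symm hb2ne) (Ne.symm hb3ne)
        (Ne.symm hb23)
    exact this
  obtain ⟨T, hTpre, hTsub, hqT, hxT⟩ := H q hqV₀ hqD x hxV₀ hxD
  set u := {S : SymmProd X 4 | ∃ y1 ∈ S.toSet, ∃ y2 ∈ S.toSet,
      y1 ≠ y2 ∧ dist y1 a < ε ∧ dist y2 a < ε} with hudef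
  set v := {S : SymmProd X 4 | ∃ y1 ∈ S.toSet, ∃ y2 ∈ S.toSet, ∃ y3 ∈ S.toSet,
      y1 ≠ y2 ∧ y1 ≠ y3 ∧ y2 ≠ y3 ∧ dist y1 b < ε ∧ dist y2 b < ε ∧ dist y3 b < ε} with hvdef
  have hqu : q ∈ u := by
    refine ⟨a, by simp [hqdef], a2, by simp [hqdef], Ne.symm ha2ne, by rw [dist_self]; exact hε,
      lt_of_lt_of_le ha2d hδε⟩
  have hxv : x ∈ v := by
    refine ⟨b, by simp [hxdef], b2, by simp [hxdef], b3, by simp [hxdef],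
      Ne.symm hb2ne, Ne.symm hb3ne, Ne.symm hb23, by rw [dist_self]; exact hε,
      lt_of_lt_of_le hb2d hδε, lt_of_lt_of_le hb3δ hδε⟩
  have hcover : T ⊆ u ∪ v := by
    intro S hS
    rcases hTsub hS with ⟨hSV, hSD⟩ | hSq
    · -- S ∈ V ∩ D4
      have hSA : dist S A < ε := Metric.mem_ball.mp hSV
      set Sa := {z ∈ S.toSet | dist z a < ε} with hSadef
      set Sb := {z ∈ S.toSet | dist z b < ε} with hSbdef
      have hSafin : Sa.Finite := (sp_fin S).subset (Set.sep_subset _ _)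
      have hSbfin : Sb.Finite := (sp_fin S).subset (Set.sep_subset _ _)
      have hScov : S.toSet = Sa ∪ Sb := by
        apply Set.Subset.antisymm
        · intro z hz
          obtain ⟨w, hw, hd⟩ := near_of_dist_lt hSA hz
          rcases (hmemA w).mp hw with rfl | rfl
          · exact Or.inl ⟨hz, hd⟩
          · exact Or.inr ⟨hz, hd⟩
        · intro z hz
          rcases hz with h | h <;> exact h.1
      by_cases h2a : 2 ≤ Sa.ncard
      · obtain ⟨y1, y2, hy1, hy2, hne⟩ := Set.one_lt_ncard_iff hSafin |>.mp h2a
        exact Or.inl ⟨y1, hy1.1, y2, hy2.1, hne, hy1.2, hy2.2⟩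
      · have hb3' : 3 ≤ Sb.ncard := by
          have h4 : S.toSet.ncard = 4 := hSD
          rw [hScov] at h4
          have := Set.ncard_union_le Sa Sb
          omega
        obtain ⟨y1, y2, y3, hy1, hy2, hy3, h12, h13, h23⟩ :=
          Set.two_lt_ncard_iff hSbfin |>.mp hb3'
        exact Or.inr ⟨y1, hy1.1, y2, hy2.1, y3, hy3.1, h12, h13, h23, hy1.2, hy2.2, hy3.2⟩
    · rw [Set.mem_singleton_iff] at hSq
      subst hSq
      exact Or.inl hqu
  obtain ⟨S, hST, hSu, hSv⟩ := hTpre u v (open_two_near a ε) (open_three_near b ε)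
    hcover ⟨q, hqT, hqu⟩ ⟨x, hxT, hxv⟩
  obtain ⟨y1, hy1, y2, hy2, hyne, hy1d, hy2d⟩ := hSu
  obtain ⟨w1, hw1, w2, hw2, w3, hw3, hw12, hw13, hw23, hw1d, hw2d, hw3d⟩ := hSv
  have hcross : ∀ y w : X, dist y a < ε → dist w b < ε → y ≠ w := by
    intro y w hy hw heq
    subst heq
    have t := dist_triangle a y b
    have e1 : dist a y = dist y a := dist_comm _ _
    have e2 : dist y b = dist y b := rfl
    rw [hεdef] at hy hw
    have hd := dist_pos.2 hab
    linarith
  have hsub5 : ({y1, y2, w1, w2, w3} : Set X) ⊆ S.toSet := by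
    intro z hz
    simp only [Set.mem_insert_iff, Set.mem_singleton_iff] at hz
    rcases hz with rfl | rfl | rfl | rfl | rfl <;> assumption
  have h5 : ({y1, y2, w1, w2, w3} : Set X).ncard = 5 :=
    ncard5_eq hyne (hcross y1 w1 hy1d hw1d) (hcross y1 w2 hy1d hw2d) (hcross y1 w3 hy1d hw3d)
      (hcross y2 w1 hy2d hw1d) (hcross y2 w2 hy2d hw2d) (hcross y2 w3 hy2d hw3d)
      hw12 hw13 hw23
  have hle := Set.ncard_le_ncard hsub5 (sp_fin S)
  have := sp_card_le S
  omega
end Claim2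


section Final
open Topology
variable {X : Type*} [MetricSpace X]

lemma good_transport (h : SymmProd X 4 ≃ₜ SymmProd X 4)
    (hD : ∀ z : SymmProd X 4, h z ∈ D4 X ↔ z ∈ D4 X) {y : SymmProd X 4}
    (hg : Good (h y)) : Good y := by
  intro V hV
  have hV' : h '' V ∈ 𝓝 (h y) := by
    rw [← h.map_nhds_eq y]
    exact Filter.image_mem_map hV
  obtain ⟨V₀', hV₀'n, hV₀'sub, H⟩ := hg (h '' V) hV'
  refine ⟨h ⁻¹' V₀', h.continuous.continuousAt.preimage_mem_nhds hV₀'n, ?_, ?_⟩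
  · intro z hz
    obtain ⟨w, hwV, hwe⟩ := hV₀'sub hz
    rwa [← h.injective hwe]
  · intro q hq hqD x hx hxD
    obtain ⟨T', hT'pre, hT'sub, hqT', hxT'⟩ :=
      H (h q) hq (fun hc => hqD ((hD q).mp hc)) (h x) hx ((hD x).mpr hxD)
    refine ⟨h.symm '' T', hT'pre.image _ h.symm.continuous.continuousOn, ?_,
      ⟨h q, hqT', h.symm_apply_apply q⟩, ⟨h x, hxT', h.symm_apply_apply x⟩⟩
    rintro S ⟨S', hS', rfl⟩
    rcases hT'sub hS' with ⟨⟨w, hwV, hwe⟩, hS'D⟩ | hS'q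
    · left
      refine ⟨?_, ?_⟩
      · rw [← hwe, h.symm_apply_apply]
        exact hwV
      · exact (hD (h.symm S')).mp (by rwa [h.apply_symm_apply])
    · right
      rw [Set.mem_singleton_iff] at hS'q ⊢
      rw [hS'q, h.symm_apply_apply]
end Final


end SP
theorem stmt5 (X : Type*) [MetricSpace X] [CompactSpace X] [ConnectedSpace X]
    [LocallyConnectedSpace X] [Nonempty X]
    (htype : ∀ h : SymmProd X 4 ≃ₜ SymmProd X 4,
      h '' {A : SymmProd X 4 | A.toSet.ncard = 4} = {A : SymmProd X 4 | A.toSet.ncard = 4}) :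
    ∀ h : SymmProd X 4 ≃ₜ SymmProd X 4,
      (h '' {A : SymmProd X 4 | A.toSet.ncard = 2}) ∩ {A : SymmProd X 4 | A.toSet.ncard = 3}
        = ∅ := by
  intro h
  by_contra hne
  obtain ⟨C, hC⟩ := Set.nonempty_iff_ne_empty.mpr hne
  obtain ⟨⟨A, hA2, rfl⟩, hC3⟩ := hC
  have hD : ∀ z : SymmProd X 4, h z ∈ SP.D4 X ↔ z ∈ SP.D4 X := by
    intro z
    constructor
    · intro hz
      have hz' : h z ∈ h '' {A : SymmProd X 4 | A.toSet.ncard = 4} := by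
        rw [htype h]
        exact hz
      obtain ⟨w, hw, hwe⟩ := hz'
      have : w = z := h.injective hwe
      rw [← this]
      exact hw
    · intro hz
      have : h z ∈ h '' {A : SymmProd X 4 | A.toSet.ncard = 4} := ⟨z, hz, rfl⟩
      rwa [htype h] at this
  have hGhA : SP.Good (h A) := SP.good_of_three hC3
  exact SP.not_good_of_two hA2 (SP.good_transport h hD hGhA)
end

section
/- Let n ≥ 2 and let A, B ∈ Fₙ([0,1]) be such that |A| = |B| ≥ 2, A ∩ {0,1} ≠ ∅, and B ∩ {0,1} ≠ ∅. Then there exists a homeomorphism h : Fₙ([0,1]) → Fₙ([0,1]) such that h(B) = A. -/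
open TopologicalSpace

/-!
Homeomorphisms of `[0,1]` act on `Fₙ([0,1])` by taking images. Piecewise-linear order
automorphisms of `[0,1]` carry any finite subset of `(0,1)` onto any other of the same size, so
any two sets of the same size containing both `0` and `1` are related. A set containing only one
endpoint can be reflected to contain `0` and then moved to have `min = 0` and `max = 1/2`.

No homeomorphism of `[0,1]` makes such a set contain `1`. Instead, map each `C` affinely onto the
interval with endpoints `Φ (min C, max C)`, where `Φ` is a homeomorphism of the triangle
`0 ≤ m ≤ M ≤ 1` that preserves the diagonal (the singletons) and sends `(0, 1/2)` to `(0, 1)`: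
`Φ` moves each chord `m + M = s` linearly onto the chord `m + M = ψ s`, for an increasing
homeomorphism `ψ` of `[0,2]` with `ψ (1/2) = 1`.
-/

open Set Metric Filter Topology Function

namespace SymmProd

variable {X : Type*} [MetricSpace X] {n : ℕ}

theorem toSet_injective : Injective (toSet : SymmProd X n → Set X) :=
  fun _ _ h => Subtype.ext (NonemptyCompacts.ext h)

theorem finite_toSet (C : SymmProd X n) : C.toSet.Finite := C.2.1

theorem nonempty_toSet (C : SymmProd X n) : C.toSet.Nonempty := C.1.nonempty

theorem ncard_toSet_le (C : SymmProd X n) : C.toSet.ncard ≤ n := C.2.2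

theorem exists_dist_lt_of_mem {C D : SymmProd X n} {x : X} (hx : x ∈ C.toSet) {r : ℝ}
    (h : dist C D < r) : ∃ y ∈ D.toSet, dist x y < r :=
  exists_dist_lt_of_hausdorffDist_lt hx h <|
    hausdorffEDist_ne_top_of_nonempty_of_bounded C.nonempty_toSet D.nonempty_toSet
      C.finite_toSet.isBounded D.finite_toSet.isBounded

theorem dist_le_of_forall_exists {C D : SymmProd X n} {r : ℝ} (hr : 0 ≤ r)
    (hC : ∀ x ∈ C.toSet, ∃ y ∈ D.toSet, dist x y ≤ r)
    (hD : ∀ y ∈ D.toSet, ∃ x ∈ C.toSet, dist y x ≤ r) : dist C D ≤ r :=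
  hausdorffDist_le_of_mem_dist hr hC hD

def ofFinite (s : Set X) (hs : s.Finite) (hne : s.Nonempty) (hn : s.ncard ≤ n) : SymmProd X n :=
  ⟨⟨⟨s, hs.isCompact⟩, hne⟩, hs, hn⟩

def imageBy (F : SymmProd X n → X → X) (C : SymmProd X n) : SymmProd X n :=
  ofFinite (F C '' C.toSet) (C.finite_toSet.image _) (C.nonempty_toSet.image _)
    ((ncard_image_le C.finite_toSet).trans C.ncard_toSet_le)

@[simp]
theorem toSet_imageBy (F : SymmProd X n → X → X) (C : SymmProd X n) :
    (imageBy F C).toSet = F C '' C.toSet := rfl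

def incidence (X : Type*) [MetricSpace X] (n : ℕ) : Set (SymmProd X n × X) :=
  {p | p.2 ∈ p.1.toSet}

theorem continuous_imageBy {F : SymmProd X n → X → X}
    (hF : ContinuousOn (uncurry F) (incidence X n)) : Continuous (imageBy F) := by
  refine continuous_iff_continuousAt.2 fun C₀ => Metric.continuousAt_iff.2 fun ε hε => ?_
  -- one `δ` serves all the finitely many points of `C₀`
  have hδ : ∀ᶠ δ in 𝓝[>] (0 : ℝ), ∀ y ∈ C₀.toSet, ∀ p ∈ incidence X n,
      dist p (C₀, y) < δ → dist (uncurry F p) (F C₀ y) < ε / 2 := by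
    refine (eventually_all_finite C₀.finite_toSet).2 fun y hy => ?_
    obtain ⟨δ, hδ, h⟩ :=
      Metric.continuousWithinAt_iff.1 (hF (C₀, y) hy) (ε / 2) (half_pos hε)
    filter_upwards [Ioo_mem_nhdsGT hδ] with δ' hδ' p hp hpy using h hp (hpy.trans hδ'.2)
  obtain ⟨δ, hδF, hδ⟩ := (hδ.and self_mem_nhdsWithin).exists
  refine ⟨δ, hδ, fun {C} hC => ?_⟩
  have close : ∀ x ∈ C.toSet, ∀ y ∈ C₀.toSet, dist x y < δ →
      dist (F C x) (F C₀ y) < ε / 2 :=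
    fun x hx y hy hxy => hδF y hy (C, x) hx (by simpa [Prod.dist_eq] using ⟨hC, hxy⟩)
  refine lt_of_le_of_lt (dist_le_of_forall_exists (half_pos hε).le ?_ ?_) (half_lt_self hε)
  · rintro _ ⟨x, hx, rfl⟩
    obtain ⟨y, hy, hxy⟩ := exists_dist_lt_of_mem hx hC
    exact ⟨F C₀ y, mem_image_of_mem _ hy, (close x hx y hy hxy).le⟩
  · rintro _ ⟨y, hy, rfl⟩
    obtain ⟨x, hx, hyx⟩ := exists_dist_lt_of_mem hy (by rwa [dist_comm] at hC)
    rw [dist_comm] at hyx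
    exact ⟨F C x, mem_image_of_mem _ hx, dist_comm (F C x) _ ▸ (close x hx y hy hyx).le⟩

theorem imageBy_imageBy {F G : SymmProd X n → X → X} {C : SymmProd X n}
    (h : LeftInvOn (G (imageBy F C)) (F C) C.toSet) : imageBy G (imageBy F C) = C :=
  toSet_injective <| by rw [toSet_imageBy, toSet_imageBy, h.image_image]

def homeomorphOfImageBy (F G : SymmProd X n → X → X)
    (hF : ContinuousOn (uncurry F) (incidence X n))
    (hG : ContinuousOn (uncurry G) (incidence X n))
    (hGF : ∀ C, LeftInvOn (G (imageBy F C)) (F C) C.toSet)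
    (hFG : ∀ C, LeftInvOn (F (imageBy G C)) (G C) C.toSet) :
    SymmProd X n ≃ₜ SymmProd X n where
  toFun := imageBy F
  invFun := imageBy G
  left_inv _ := imageBy_imageBy (hGF _)
  right_inv _ := imageBy_imageBy (hFG _)
  continuous_toFun := continuous_imageBy hF
  continuous_invFun := continuous_imageBy hG

theorem ncard_toSet_homeomorphOfImageBy {F G : SymmProd X n → X → X}
    {hF : ContinuousOn (uncurry F) (incidence X n)}
    {hG : ContinuousOn (uncurry G) (incidence X n)}
    {hGF : ∀ C, LeftInvOn (G (imageBy F C)) (F C) C.toSet}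
    {hFG : ∀ C, LeftInvOn (F (imageBy G C)) (G C) C.toSet} (C : SymmProd X n) :
    (homeomorphOfImageBy F G hF hG hGF hFG C).toSet.ncard = C.toSet.ncard :=
  (hGF C).injOn.ncard_image

def mapHomeomorph (e : X ≃ₜ X) : SymmProd X n ≃ₜ SymmProd X n :=
  homeomorphOfImageBy (fun _ => e) (fun _ => e.symm)
    (e.continuous.comp continuous_snd).continuousOn
    (e.symm.continuous.comp continuous_snd).continuousOn
    (fun _ x _ => e.symm_apply_apply x) (fun _ x _ => e.apply_symm_apply x)

@[simp]
theorem toSet_mapHomeomorph (e : X ≃ₜ X) (C : SymmProd X n) :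
    (mapHomeomorph e C).toSet = e '' C.toSet := rfl

theorem ncard_toSet_mapHomeomorph (e : X ≃ₜ X) (C : SymmProd X n) :
    (mapHomeomorph e C).toSet.ncard = C.toSet.ncard :=
  ncard_toSet_homeomorphOfImageBy C

end SymmProd

noncomputable def kink (a k x : ℝ) : ℝ := if x ≤ a then x else a + k * (x - a)

theorem kink_of_le {a k x : ℝ} (h : x ≤ a) : kink a k x = x := if_pos h

theorem kink_of_ge {a k x : ℝ} (h : a ≤ x) : kink a k x = a + k * (x - a) := by
  rcases h.eq_or_lt with rfl | h
  · simp [kink]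
  · exact if_neg h.not_ge

theorem strictMono_kink (a : ℝ) {k : ℝ} (hk : 0 < k) : StrictMono (kink a k) := by
  intro x y hxy
  rcases le_total x a with hx | hx <;> rcases le_total y a with hy | hy
  · rwa [kink_of_le hx, kink_of_le hy]
  · rw [kink_of_le hx, kink_of_ge hy]
    rcases hx.lt_or_eq with hx | rfl
    · nlinarith [mul_nonneg hk.le (sub_nonneg.2 hy)]
    · nlinarith [mul_pos hk (sub_pos.2 hxy)]
  · linarith
  · rw [kink_of_ge hx, kink_of_ge hy]; nlinarith

theorem kink_kink_inv (a : ℝ) {k : ℝ} (hk : 0 < k) (x : ℝ) :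
    kink a k (kink a k⁻¹ x) = x := by
  rcases le_total x a with hx | hx
  · rw [kink_of_le hx, kink_of_le hx]
  · have : 0 ≤ k⁻¹ * (x - a) := mul_nonneg (inv_nonneg.2 hk.le) (by linarith)
    rw [kink_of_ge hx, kink_of_ge (by linarith), add_sub_cancel_left, ← mul_assoc,
      mul_inv_cancel₀ hk.ne', one_mul, add_sub_cancel]

noncomputable def kinkOrderIso (a : ℝ) {k : ℝ} (hk : 0 < k) : ℝ ≃o ℝ :=
  (strictMono_kink a hk).orderIsoOfRightInverse _ (kink a k⁻¹) (kink_kink_inv a hk)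

@[simp]
theorem kinkOrderIso_apply (a : ℝ) {k : ℝ} (hk : 0 < k) (x : ℝ) :
    kinkOrderIso a hk x = kink a k x := rfl

/-- Two kinks, at `a` and then at `c`, move `b` to `c` while fixing `1`. -/
theorem exists_orderIso_fix_le_apply_eq {a b c : ℝ} (hab : a < b) (hac : a < c) (hb : b < 1)
    (hc : c < 1) : ∃ f : ℝ ≃o ℝ, (∀ x ≤ a, f x = x) ∧ f b = c ∧ f 1 = 1 := by
  set k := (c - a) / (b - a)
  have hk : 0 < k := div_pos (by linarith) (by linarith)
  have hkb : k * (b - a) = c - a := div_mul_cancel₀ _ (by linarith)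
  set u := a + k * (1 - a)
  have hcu : c < u := by nlinarith
  have hk' : 0 < (1 - c) / (u - c) := div_pos (by linarith) (by linarith)
  refine ⟨(kinkOrderIso a hk).trans (kinkOrderIso c hk'), fun x hx => ?_, ?_, ?_⟩
  · simp [kink_of_le hx, kink_of_le (hx.trans hac.le)]
  · simp [kink_of_ge hab.le, hkb, kink_of_le]
  · simp only [OrderIso.trans_apply, kinkOrderIso_apply, kink_of_ge (hab.trans hb).le]
    rw [kink_of_ge hcu.le, div_mul_cancel₀ _ (by linarith)]
    ring

noncomputable def OrderIso.restrictUnitInterval (f : ℝ ≃o ℝ) (h0 : f 0 = 0) (h1 : f 1 = 1) :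
    unitInterval ≃o unitInterval where
  toEquiv := f.toEquiv.subtypeEquiv fun x => by
    change 0 ≤ x ∧ x ≤ 1 ↔ 0 ≤ f x ∧ f x ≤ 1
    conv_rhs => rw [← h0, ← h1, f.le_iff_le, f.le_iff_le]
  map_rel_iff' := f.le_iff_le

theorem exists_orderIso_unitInterval_fix_le_apply_eq {a b c : unitInterval} (hab : a < b)
    (hac : a < c) (hb : b < 1) (hc : c < 1) :
    ∃ g : unitInterval ≃o unitInterval, (∀ x ≤ a, g x = x) ∧ g b = c := by
  obtain ⟨f, hfix, hfb, hf1⟩ := exists_orderIso_fix_le_apply_eq (a := a) (b := b) (c := c)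
    hab hac hb hc
  refine ⟨f.restrictUnitInterval (hfix 0 a.2.1) hf1, fun x hx => Subtype.ext (hfix x hx),
    Subtype.ext hfb⟩

theorem exists_orderIso_image_eq {P Q : Set unitInterval} (hP : P.Finite) (hQ : Q.Finite)
    (hPI : P ⊆ Ioo 0 1) (hQI : Q ⊆ Ioo 0 1) (hcard : Q.ncard = P.ncard) :
    ∃ g : unitInterval ≃o unitInterval, g '' P = Q := by
  classical
  lift P to Finset unitInterval using hP
  lift Q to Finset unitInterval using hQ
  rw [ncard_coe_finset, ncard_coe_finset] at hcard
  induction P using Finset.induction_on_max generalizing Q with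
  | empty => exact ⟨OrderIso.refl _, by simp_all⟩
  | insert p P hlt ih =>
    have hp : p ∉ P := fun h => (hlt p h).false
    rw [Finset.card_insert_of_notMem hp] at hcard
    have hQne : Q.Nonempty := Finset.card_pos.1 (by omega)
    set q := Q.max' hQne
    have hq : q ∈ Q := Q.max'_mem hQne
    obtain ⟨g', hg'⟩ := ih (fun x hx => hPI (by simp [hx])) (Q.erase q)
      (fun x hx => hQI (Finset.mem_of_mem_erase hx))
      (by rw [Finset.card_erase_of_mem hq, hcard, Nat.add_sub_cancel])
    have hpI := hPI (show p ∈ ↑(insert p P) by simp)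
    have hqI := hQI hq
    set a := (insert 0 (Q.erase q)).max' (Finset.insert_nonempty _ _)
    have har : a < g' p := by
      refine (Finset.max'_lt_iff _ _).2 fun z hz => ?_
      rcases Finset.mem_insert.1 hz with rfl | hz
      · exact g'.map_bot.symm.trans_lt (g'.strictMono hpI.1)
      · obtain ⟨x, hx, rfl⟩ := (Set.ext_iff.1 hg' z).2 hz
        exact g'.strictMono (hlt x hx)
    have haq : a < q := by
      refine (Finset.max'_lt_iff _ _).2 fun z hz => ?_
      rcases Finset.mem_insert.1 hz with rfl | hz
      · exact hqI.1
      · exact (Q.le_max' z (Finset.mem_of_mem_erase hz)).lt_of_ne (Finset.ne_of_mem_erase hz)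
    have hr1 : g' p < 1 := (g'.strictMono hpI.2).trans_eq g'.map_top
    obtain ⟨g₀, hfix, hg₀⟩ := exists_orderIso_unitInterval_fix_le_apply_eq har haq hr1 hqI.2
    refine ⟨g'.trans g₀, ?_⟩
    calc (g'.trans g₀) '' ↑(insert p P) = insert (g₀ (g' p)) (g₀ '' (g' '' ↑P)) := by
          simp [image_insert_eq, image_image]
      _ = insert q ↑(Q.erase q) := by
          rw [hg', hg₀, image_congr fun z hz => hfix z ((insert 0 (Q.erase q)).le_max' z
            (Finset.mem_insert_of_mem hz)), image_id']
      _ = ↑Q := by rw [← Finset.coe_insert, Finset.insert_erase hq]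

namespace SymmProd

variable {n : ℕ}

theorem diff_zero_one_subset_Ioo (C : SymmProd unitInterval n) :
    C.toSet \ {0, 1} ⊆ Ioo 0 1 := fun x hx => by
  simp only [Set.mem_sdiff, mem_insert_iff, mem_singleton_iff, not_or] at hx
  exact ⟨unitInterval.pos_iff_ne_zero.2 hx.2.1, unitInterval.lt_one_iff_ne_one.2 hx.2.2⟩

theorem exists_homeomorph_apply_eq_of_zero_one_subset {C D : SymmProd unitInterval n}
    (hC : {0, 1} ⊆ C.toSet) (hD : {0, 1} ⊆ D.toSet) (hcard : C.toSet.ncard = D.toSet.ncard) :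
    ∃ H : SymmProd unitInterval n ≃ₜ SymmProd unitInterval n, H C = D := by
  obtain ⟨g, hg⟩ := exists_orderIso_image_eq C.finite_toSet.sdiff D.finite_toSet.sdiff
    C.diff_zero_one_subset_Ioo D.diff_zero_one_subset_Ioo
    (by rw [ncard_sdiff hD, ncard_sdiff hC, hcard])
  refine ⟨mapHomeomorph g.toHomeomorph, toSet_injective ?_⟩
  have h0 : g 0 = 0 := g.map_bot
  have h1 : g 1 = 1 := g.map_top
  rw [toSet_mapHomeomorph, OrderIso.coe_toHomeomorph, ← sdiff_union_of_subset hC,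
    ← sdiff_union_of_subset hD, image_union, hg, image_pair, h0, h1]

end SymmProd

def triangle : Set (ℝ × ℝ) := {p | 0 ≤ p.1 ∧ p.1 ≤ p.2 ∧ p.2 ≤ 1}

structure IsTriangleMap (Φ : ℝ × ℝ → ℝ × ℝ) : Prop where
  mapsTo : MapsTo Φ triangle triangle
  continuousOn : ContinuousOn Φ triangle
  fst_eq_snd : ∀ p ∈ triangle, p.1 = p.2 → (Φ p).1 = (Φ p).2

-- the constant `q.1` if `p.1 = p.2`, as `x / 0 = 0`
noncomputable def rescale (p q : ℝ × ℝ) (x : ℝ) : ℝ :=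
  q.1 + (q.2 - q.1) / (p.2 - p.1) * (x - p.1)

@[simp]
theorem rescale_fst (p q : ℝ × ℝ) : rescale p q p.1 = q.1 := by
  simp [rescale]

theorem rescale_snd {p q : ℝ × ℝ} (h : p.1 = p.2 → q.1 = q.2) : rescale p q p.2 = q.2 := by
  by_cases hp : p.1 = p.2
  · rw [← hp, rescale_fst, h hp]
  · rw [rescale, div_mul_cancel₀ _ (sub_ne_zero.2 (Ne.symm hp))]
    ring

theorem rescale_mem_Icc {p q : ℝ × ℝ} {x : ℝ} (hx : x ∈ Icc p.1 p.2) (hq : q.1 ≤ q.2) :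
    rescale p q x ∈ Icc q.1 q.2 := by
  rcases (hx.1.trans hx.2).eq_or_lt with hp | hp
  · rw [le_antisymm (hp ▸ hx.2) hx.1, rescale_fst]
    exact left_mem_Icc.2 hq
  · have ht : (x - p.1) / (p.2 - p.1) ∈ Icc (0 : ℝ) 1 :=
      ⟨div_nonneg (by linarith [hx.1]) (by linarith), div_le_one_of_le₀ (by linarith [hx.2])
        (by linarith)⟩
    rw [rescale, div_mul_comm]
    constructor <;> nlinarith [ht.1, ht.2]

theorem rescale_rescale {p q : ℝ × ℝ} (hp : p.1 ≠ p.2) (hq : q.1 ≠ q.2) (x : ℝ) :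
    rescale q p (rescale p q x) = x := by
  have hp' : p.2 - p.1 ≠ 0 := sub_ne_zero.2 (Ne.symm hp)
  have hq' : q.2 - q.1 ≠ 0 := sub_ne_zero.2 (Ne.symm hq)
  simp only [rescale]
  field_simp
  ring

/-- The largest value of `M - m` on the chord `m + M = s` of the triangle. -/
noncomputable def maxSpread (s : ℝ) : ℝ := min s (2 - s)

theorem continuous_maxSpread : Continuous maxSpread :=
  continuous_id.min (continuous_const.sub continuous_id)

theorem maxSpread_eq_zero_iff {s : ℝ} (h0 : 0 ≤ s) (h2 : s ≤ 2) :
    maxSpread s = 0 ↔ s = 0 ∨ s = 2 := by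
  rcases le_total s (2 - s) with h | h
  · rw [maxSpread, min_eq_left h]
    constructor <;> intro hs <;> [exact Or.inl hs; rcases hs with hs | hs <;> linarith]
  · rw [maxSpread, min_eq_right h]
    constructor <;> intro hs <;>
      [exact Or.inr (by linarith); rcases hs with hs | hs <;> linarith]

theorem mem_triangle_iff {p : ℝ × ℝ} :
    p ∈ triangle ↔ 0 ≤ p.2 - p.1 ∧ p.2 - p.1 ≤ maxSpread (p.1 + p.2) := by
  change 0 ≤ p.1 ∧ p.1 ≤ p.2 ∧ p.2 ≤ 1 ↔ _
  simp only [maxSpread, le_min_iff]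
  constructor
  · rintro ⟨h₁, h₂, h₃⟩
    exact ⟨by linarith, by linarith, by linarith⟩
  · rintro ⟨h₁, h₂, h₃⟩
    exact ⟨by linarith, by linarith, by linarith⟩

theorem add_mem_Icc_of_mem_triangle {p : ℝ × ℝ} (hp : p ∈ triangle) :
    p.1 + p.2 ∈ Icc 0 2 :=
  ⟨by linarith [hp.1, hp.2.1], by linarith [hp.2.1, hp.2.2]⟩

noncomputable def ofSumDiff (s d : ℝ) : ℝ × ℝ := ((s - d) / 2, (s + d) / 2)

theorem continuous_ofSumDiff : Continuous (uncurry ofSumDiff) := by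
  unfold ofSumDiff; fun_prop

@[simp]
theorem ofSumDiff_fst_add_snd (s d : ℝ) : (ofSumDiff s d).1 + (ofSumDiff s d).2 = s := by
  simp only [ofSumDiff]; ring

@[simp]
theorem ofSumDiff_snd_sub_fst (s d : ℝ) : (ofSumDiff s d).2 - (ofSumDiff s d).1 = d := by
  simp only [ofSumDiff]; ring

theorem ofSumDiff_add_sub (p : ℝ × ℝ) : ofSumDiff (p.1 + p.2) (p.2 - p.1) = p := by
  ext <;> simp only [ofSumDiff] <;> ring

theorem ofSumDiff_mem_triangle {s d : ℝ} (h0 : 0 ≤ d) (h : d ≤ maxSpread s) :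
    ofSumDiff s d ∈ triangle :=
  mem_triangle_iff.2 <| by simpa using ⟨h0, h⟩

noncomputable def reparamSpread (ψ : ℝ → ℝ) (p : ℝ × ℝ) : ℝ :=
  maxSpread (ψ (p.1 + p.2)) * (p.2 - p.1) / maxSpread (p.1 + p.2)

/-- Maps each chord `m + M = s` of the triangle linearly onto the chord `m + M = ψ s`. -/
noncomputable def reparamSum (ψ : ℝ → ℝ) (p : ℝ × ℝ) : ℝ × ℝ :=
  ofSumDiff (ψ (p.1 + p.2)) (reparamSpread ψ p)

section ReparamSum

variable {ψ : ℝ ≃o ℝ} (h0 : ψ 0 = 0) (h2 : ψ 2 = 2)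
include h0 h2

theorem apply_mem_Icc_zero_two {s : ℝ} (hs : s ∈ Icc 0 2) : ψ s ∈ Icc 0 2 :=
  ⟨h0 ▸ ψ.monotone hs.1, h2 ▸ ψ.monotone hs.2⟩

theorem maxSpread_apply_eq_zero_iff {s : ℝ} (hs : s ∈ Icc 0 2) :
    maxSpread (ψ s) = 0 ↔ maxSpread s = 0 := by
  obtain ⟨hψ0, hψ2⟩ := apply_mem_Icc_zero_two h0 h2 hs
  rw [maxSpread_eq_zero_iff hψ0 hψ2, maxSpread_eq_zero_iff hs.1 hs.2]
  conv_lhs => rw [← h0, ← h2, ψ.injective.eq_iff, ψ.injective.eq_iff]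

theorem reparamSpread_mem_Icc {p : ℝ × ℝ} (hp : p ∈ triangle) :
    reparamSpread ψ p ∈ Icc 0 (maxSpread (ψ (p.1 + p.2))) := by
  obtain ⟨hd0, hd⟩ := mem_triangle_iff.1 hp
  obtain ⟨hψ0, hψ2⟩ := apply_mem_Icc_zero_two h0 h2 (add_mem_Icc_of_mem_triangle hp)
  have hc : 0 ≤ maxSpread (ψ (p.1 + p.2)) := le_min hψ0 (by linarith)
  have ht0 : 0 ≤ (p.2 - p.1) / maxSpread (p.1 + p.2) := div_nonneg hd0 (hd0.trans hd)
  have ht1 : (p.2 - p.1) / maxSpread (p.1 + p.2) ≤ 1 := div_le_one_of_le₀ hd (hd0.trans hd)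
  rw [reparamSpread, mul_div_assoc]
  exact ⟨mul_nonneg hc ht0, mul_le_of_le_one_right hc ht1⟩

theorem continuousWithinAt_reparamSpread {p : ℝ × ℝ} (hp : p ∈ triangle) :
    ContinuousWithinAt (reparamSpread ψ) triangle p := by
  have hsum : Continuous fun q : ℝ × ℝ => q.1 + q.2 := continuous_fst.add continuous_snd
  have hnum : Continuous fun q : ℝ × ℝ => maxSpread (ψ (q.1 + q.2)) :=
    continuous_maxSpread.comp (ψ.continuous.comp hsum)
  by_cases hs : maxSpread (p.1 + p.2) = 0
  · -- at the corners `(0, 0)` and `(1, 1)` the chord degenerates: squeeze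
    have hψs : maxSpread (ψ (p.1 + p.2)) = 0 :=
      (maxSpread_apply_eq_zero_iff h0 h2 (add_mem_Icc_of_mem_triangle hp)).2 hs
    have hval : reparamSpread ψ p = 0 := by simp [reparamSpread, hs]
    have hlim :
        Tendsto (fun q : ℝ × ℝ => maxSpread (ψ (q.1 + q.2))) (𝓝[triangle] p) (𝓝 0) := by
      simpa [hψs] using (hnum.tendsto p).mono_left nhdsWithin_le_nhds
    rw [ContinuousWithinAt, hval]
    refine tendsto_of_tendsto_of_tendsto_of_le_of_le' tendsto_const_nhds hlim ?_ ?_ <;>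
    filter_upwards [self_mem_nhdsWithin] with q hq
    exacts [(reparamSpread_mem_Icc h0 h2 hq).1, (reparamSpread_mem_Icc h0 h2 hq).2]
  · exact ((hnum.mul (continuous_snd.sub continuous_fst)).continuousAt.div
      (continuous_maxSpread.comp hsum).continuousAt hs).continuousWithinAt

theorem isTriangleMap_reparamSum : IsTriangleMap (reparamSum ψ) where
  mapsTo _ hp := ofSumDiff_mem_triangle (reparamSpread_mem_Icc h0 h2 hp).1
    (reparamSpread_mem_Icc h0 h2 hp).2
  continuousOn := continuous_ofSumDiff.comp_continuousOn <|
    (ψ.continuous.comp (continuous_fst.add continuous_snd)).continuousOn.prodMk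
      fun _ hp => continuousWithinAt_reparamSpread h0 h2 hp
  fst_eq_snd p _ h := by simp [reparamSum, reparamSpread, ofSumDiff, h]

theorem reparamSum_symm_reparamSum {p : ℝ × ℝ} (hp : p ∈ triangle) :
    reparamSum ψ.symm (reparamSum ψ p) = p := by
  have hs := add_mem_Icc_of_mem_triangle hp
  have key : maxSpread (p.1 + p.2) *
      (maxSpread (ψ (p.1 + p.2)) * (p.2 - p.1) / maxSpread (p.1 + p.2)) /
      maxSpread (ψ (p.1 + p.2)) = p.2 - p.1 := by
    by_cases h : maxSpread (p.1 + p.2) = 0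
    · have hd := mem_triangle_iff.1 hp
      rw [h, zero_mul, zero_div]
      linarith [hd.1, hd.2]
    · have h' : maxSpread (ψ (p.1 + p.2)) ≠ 0 := (maxSpread_apply_eq_zero_iff h0 h2 hs).not.2 h
      field_simp
  conv_rhs => rw [← ofSumDiff_add_sub p]
  simp only [reparamSum, ofSumDiff_fst_add_snd, ofSumDiff_snd_sub_fst, reparamSpread,
    OrderIso.symm_apply_apply, key]

end ReparamSum

theorem invOn_reparamSum {ψ : ℝ ≃o ℝ} (h0 : ψ 0 = 0) (h2 : ψ 2 = 2) :
    InvOn (reparamSum ψ.symm) (reparamSum ψ) triangle triangle := by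
  have h0' : ψ.symm 0 = 0 := ψ.symm_apply_eq.2 h0.symm
  have h2' : ψ.symm 2 = 2 := ψ.symm_apply_eq.2 h2.symm
  exact ⟨fun p hp => reparamSum_symm_reparamSum h0 h2 hp,
    fun p hp => by simpa using reparamSum_symm_reparamSum h0' h2' hp⟩

namespace SymmProd

variable {n : ℕ}

noncomputable def lower (C : SymmProd unitInterval n) : unitInterval := sInf C.toSet

noncomputable def upper (C : SymmProd unitInterval n) : unitInterval := sSup C.toSet

theorem lower_mem (C : SymmProd unitInterval n) : C.lower ∈ C.toSet :=
  C.nonempty_toSet.csInf_mem C.finite_toSet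

theorem upper_mem (C : SymmProd unitInterval n) : C.upper ∈ C.toSet :=
  C.nonempty_toSet.csSup_mem C.finite_toSet

theorem lower_le {C : SymmProd unitInterval n} {x : unitInterval} (hx : x ∈ C.toSet) :
    C.lower ≤ x :=
  sInf_le hx

theorem le_upper {C : SymmProd unitInterval n} {x : unitInterval} (hx : x ∈ C.toSet) :
    x ≤ C.upper :=
  le_sSup hx

theorem lower_le_lower_add_dist (C D : SymmProd unitInterval n) :
    (D.lower : ℝ) ≤ C.lower + dist C D := by
  refine le_of_forall_pos_lt_add fun ε hε => ?_
  obtain ⟨y, hy, hdist⟩ := exists_dist_lt_of_mem C.lower_mem (lt_add_of_pos_right _ hε)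
  have hle : (D.lower : ℝ) ≤ y := D.lower_le hy
  rw [Subtype.dist_eq, Real.dist_eq, abs_sub_lt_iff] at hdist
  linarith [hdist.2]

theorem upper_le_upper_add_dist (C D : SymmProd unitInterval n) :
    (C.upper : ℝ) ≤ D.upper + dist C D := by
  refine le_of_forall_pos_lt_add fun ε hε => ?_
  obtain ⟨y, hy, hdist⟩ := exists_dist_lt_of_mem C.upper_mem (lt_add_of_pos_right _ hε)
  have hle : (y : ℝ) ≤ D.upper := D.le_upper hy
  rw [Subtype.dist_eq, Real.dist_eq, abs_sub_lt_iff] at hdist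
  linarith [hdist.1]

theorem continuous_lower : Continuous fun C : SymmProd unitInterval n => (C.lower : ℝ) :=
  LipschitzWith.continuous (K := 1) <| LipschitzWith.of_dist_le_mul fun C D => by
    rw [NNReal.coe_one, one_mul, Real.dist_eq, abs_sub_le_iff]
    constructor
    · linarith [lower_le_lower_add_dist D C, dist_comm C D]
    · linarith [lower_le_lower_add_dist C D]

theorem continuous_upper : Continuous fun C : SymmProd unitInterval n => (C.upper : ℝ) :=
  LipschitzWith.continuous (K := 1) <| LipschitzWith.of_dist_le_mul fun C D => by
    rw [NNReal.coe_one, one_mul, Real.dist_eq, abs_sub_le_iff]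
    constructor
    · linarith [upper_le_upper_add_dist C D]
    · linarith [upper_le_upper_add_dist D C, dist_comm C D]

noncomputable def ends (C : SymmProd unitInterval n) : ℝ × ℝ := (C.lower, C.upper)

theorem continuous_ends : Continuous (ends : SymmProd unitInterval n → ℝ × ℝ) :=
  continuous_lower.prodMk continuous_upper

theorem ends_mem_triangle (C : SymmProd unitInterval n) : C.ends ∈ triangle :=
  ⟨C.lower.2.1, lower_le C.upper_mem, C.upper.2.2⟩

theorem mem_Icc_ends {C : SymmProd unitInterval n} {x : unitInterval} (hx : x ∈ C.toSet) :
    (x : ℝ) ∈ Icc C.ends.1 C.ends.2 :=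
  ⟨lower_le hx, le_upper hx⟩

noncomputable def rescaleFamily (Φ : ℝ × ℝ → ℝ × ℝ) (C : SymmProd unitInterval n)
    (x : unitInterval) : unitInterval :=
  projIcc 0 1 zero_le_one (rescale C.ends (Φ C.ends) x)

variable {Φ Ψ : ℝ × ℝ → ℝ × ℝ}

theorem rescale_mem_Icc_image {C : SymmProd unitInterval n} {x : unitInterval}
    (hΦ : MapsTo Φ triangle triangle) (hx : x ∈ C.toSet) :
    rescale C.ends (Φ C.ends) x ∈ Icc (Φ C.ends).1 (Φ C.ends).2 :=
  rescale_mem_Icc (mem_Icc_ends hx) (hΦ C.ends_mem_triangle).2.1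

theorem coe_rescaleFamily {C : SymmProd unitInterval n} {x : unitInterval}
    (hΦ : MapsTo Φ triangle triangle) (hx : x ∈ C.toSet) :
    (rescaleFamily Φ C x : ℝ) = rescale C.ends (Φ C.ends) x := by
  have hq := hΦ C.ends_mem_triangle
  have hmem := rescale_mem_Icc_image hΦ hx
  rw [rescaleFamily, projIcc_of_mem _ ⟨hq.1.trans hmem.1, hmem.2.trans hq.2.2⟩]

theorem ends_imageBy_rescaleFamily (hΦ : IsTriangleMap Φ) (C : SymmProd unitInterval n) :
    (imageBy (rescaleFamily Φ) C).ends = Φ C.ends := by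
  set C' := imageBy (rescaleFamily Φ) C
  have hval : ∀ x ∈ C.toSet, (rescaleFamily Φ C x : ℝ) ∈ Icc (Φ C.ends).1 (Φ C.ends).2 :=
    fun x hx => coe_rescaleFamily hΦ.mapsTo hx ▸ rescale_mem_Icc_image hΦ.mapsTo hx
  have hlo : rescaleFamily Φ C C.lower ∈ C'.toSet := mem_image_of_mem _ C.lower_mem
  have hhi : rescaleFamily Φ C C.upper ∈ C'.toSet := mem_image_of_mem _ C.upper_mem
  have hlo' : (rescaleFamily Φ C C.lower : ℝ) = (Φ C.ends).1 := by
    rw [coe_rescaleFamily hΦ.mapsTo C.lower_mem]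
    exact rescale_fst _ _
  have hhi' : (rescaleFamily Φ C C.upper : ℝ) = (Φ C.ends).2 := by
    rw [coe_rescaleFamily hΦ.mapsTo C.upper_mem]
    exact rescale_snd (hΦ.fst_eq_snd _ C.ends_mem_triangle)
  obtain ⟨x, hx, hxlo⟩ := C'.lower_mem
  obtain ⟨y, hy, hyhi⟩ := C'.upper_mem
  refine Prod.ext (le_antisymm ?_ ?_) (le_antisymm ?_ ?_)
  · exact hlo' ▸ lower_le hlo
  · change (Φ C.ends).1 ≤ (C'.lower : ℝ)
    exact hxlo ▸ (hval x hx).1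
  · change (C'.upper : ℝ) ≤ (Φ C.ends).2
    exact hyhi ▸ (hval y hy).2
  · exact hhi' ▸ le_upper hhi

theorem continuousOn_rescaleFamily (hΦ : IsTriangleMap Φ) :
    ContinuousOn (uncurry (rescaleFamily Φ)) (incidence unitInterval n) := by
  rintro ⟨C₀, y⟩ hy
  have hE : Continuous fun C : SymmProd unitInterval n => Φ C.ends :=
    hΦ.continuousOn.comp_continuous continuous_ends ends_mem_triangle
  have key : ContinuousWithinAt (fun p : SymmProd unitInterval n × unitInterval =>
      rescale p.1.ends (Φ p.1.ends) p.2) (incidence unitInterval n) (C₀, y) := by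
    by_cases hdeg : C₀.ends.1 = C₀.ends.2
    · -- `C₀` is a singleton: squeeze between the endpoints of the image
      have hy₀ : (y : ℝ) = C₀.ends.1 :=
        le_antisymm (hdeg ▸ (mem_Icc_ends hy).2) (mem_Icc_ends hy).1
      have hlim : ∀ g : ℝ × ℝ → ℝ, Continuous g →
          Tendsto (fun p : SymmProd unitInterval n × unitInterval => g (Φ p.1.ends))
            (𝓝[incidence unitInterval n] (C₀, y)) (𝓝 (g (Φ C₀.ends))) := fun g hg =>
        ((hg.comp (hE.comp continuous_fst)).tendsto (C₀, y)).mono_left nhdsWithin_le_nhds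
      rw [ContinuousWithinAt, hy₀, rescale_fst]
      have hsnd := hlim _ continuous_snd
      rw [← hΦ.fst_eq_snd _ C₀.ends_mem_triangle hdeg] at hsnd
      refine tendsto_of_tendsto_of_tendsto_of_le_of_le' (hlim _ continuous_fst) hsnd ?_ ?_ <;>
        filter_upwards [self_mem_nhdsWithin] with p hp
      exacts [(rescale_mem_Icc_image hΦ.mapsTo hp).1, (rescale_mem_Icc_image hΦ.mapsTo hp).2]
    · have hden : C₀.ends.2 - C₀.ends.1 ≠ 0 := sub_ne_zero.2 (Ne.symm hdeg)
      have h₁ : Continuous fun p : SymmProd unitInterval n × unitInterval => p.1.ends :=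
        continuous_ends.comp continuous_fst
      have h₂ : Continuous fun p : SymmProd unitInterval n × unitInterval => Φ p.1.ends :=
        hE.comp continuous_fst
      have h₃ : Continuous fun p : SymmProd unitInterval n × unitInterval => (p.2 : ℝ) :=
        continuous_subtype_val.comp continuous_snd
      refine ContinuousAt.continuousWithinAt ?_
      exact h₂.fst.continuousAt.add (((h₂.snd.sub h₂.fst).continuousAt.div
        (h₁.snd.sub h₁.fst).continuousAt hden).mul (h₃.sub h₁.fst).continuousAt)
  exact (continuous_projIcc (h := zero_le_one' ℝ)).continuousAt.comp_continuousWithinAt key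

theorem leftInvOn_rescaleFamily (hΦ : IsTriangleMap Φ) (hΨ : IsTriangleMap Ψ)
    (h : LeftInvOn Ψ Φ triangle) (C : SymmProd unitInterval n) :
    LeftInvOn (rescaleFamily Ψ (imageBy (rescaleFamily Φ) C)) (rescaleFamily Φ C) C.toSet := by
  intro x hx
  have hΦe := hΦ.mapsTo C.ends_mem_triangle
  have hΨΦ : Ψ (Φ C.ends) = C.ends := h C.ends_mem_triangle
  apply Subtype.ext
  rw [coe_rescaleFamily hΨ.mapsTo (mem_image_of_mem _ hx), ends_imageBy_rescaleFamily hΦ, hΨΦ,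
    coe_rescaleFamily hΦ.mapsTo hx]
  by_cases hdeg : C.ends.1 = C.ends.2
  · have hx₀ : (x : ℝ) = C.ends.1 :=
      le_antisymm (hdeg ▸ (mem_Icc_ends hx).2) (mem_Icc_ends hx).1
    rw [hx₀, rescale_fst, rescale_fst]
  · refine rescale_rescale hdeg (fun hdeg' => hdeg ?_) _
    rw [← hΨΦ]
    exact hΨ.fst_eq_snd _ hΦe hdeg'

noncomputable def rescaleHomeomorph (hΦ : IsTriangleMap Φ) (hΨ : IsTriangleMap Ψ)
    (h : InvOn Ψ Φ triangle triangle) : SymmProd unitInterval n ≃ₜ SymmProd unitInterval n :=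
  homeomorphOfImageBy (rescaleFamily Φ) (rescaleFamily Ψ) (continuousOn_rescaleFamily hΦ)
    (continuousOn_rescaleFamily hΨ) (leftInvOn_rescaleFamily hΦ hΨ h.1)
    (leftInvOn_rescaleFamily hΨ hΦ h.2)

theorem ends_rescaleHomeomorph (hΦ : IsTriangleMap Φ) (hΨ : IsTriangleMap Ψ)
    (h : InvOn Ψ Φ triangle triangle) (C : SymmProd unitInterval n) :
    (rescaleHomeomorph hΦ hΨ h C).ends = Φ C.ends :=
  ends_imageBy_rescaleFamily hΦ C

theorem ncard_toSet_rescaleHomeomorph (hΦ : IsTriangleMap Φ) (hΨ : IsTriangleMap Ψ)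
    (h : InvOn Ψ Φ triangle triangle) (C : SymmProd unitInterval n) :
    (rescaleHomeomorph hΦ hΨ h C).toSet.ncard = C.toSet.ncard :=
  ncard_toSet_homeomorphOfImageBy C

end SymmProd

theorem exists_orderIso_zero_two_half :
    ∃ ψ : ℝ ≃o ℝ, ψ 0 = 0 ∧ ψ 2 = 2 ∧ ψ (1 / 2) = 1 := by
  refine ⟨(OrderIso.mulLeft₀ 2 two_pos).trans (kinkOrderIso 1 (k := 1 / 3) (by norm_num)),
    ?_, ?_, ?_⟩ <;> norm_num [kink]

theorem reparamSum_zero_half {ψ : ℝ → ℝ} (h : ψ (1 / 2) = 1) :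
    reparamSum ψ (0, 1 / 2) = (0, 1) := by
  norm_num [reparamSum, reparamSpread, maxSpread, ofSumDiff, h]

namespace SymmProd

variable {n : ℕ}

theorem zero_one_subset_of_ends_eq {C : SymmProd unitInterval n} (h : C.ends = (0, 1)) :
    {0, 1} ⊆ C.toSet := by
  have h0 : C.lower = 0 := Subtype.ext (congrArg Prod.fst h)
  have h1 : C.upper = 1 := Subtype.ext (congrArg Prod.snd h)
  exact insert_subset (h0 ▸ C.lower_mem) (singleton_subset_iff.2 (h1 ▸ C.upper_mem))

theorem upper_mapHomeomorph (g : unitInterval ≃o unitInterval) (C : SymmProd unitInterval n) :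
    (mapHomeomorph g.toHomeomorph C).upper = g C.upper := by
  rw [upper, upper, toSet_mapHomeomorph, OrderIso.coe_toHomeomorph, g.map_sSup, sSup_image]

theorem exists_homeomorph_ends_eq_zero_one :
    ∃ H : SymmProd unitInterval n ≃ₜ SymmProd unitInterval n,
      (∀ C, (H C).toSet.ncard = C.toSet.ncard) ∧
        ∀ C, C.ends = (0, 1 / 2) → (H C).ends = (0, 1) := by
  obtain ⟨ψ, h0, h2, hhalf⟩ := exists_orderIso_zero_two_half
  have h0' : ψ.symm 0 = 0 := ψ.symm_apply_eq.2 h0.symm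
  have h2' : ψ.symm 2 = 2 := ψ.symm_apply_eq.2 h2.symm
  refine ⟨rescaleHomeomorph (isTriangleMap_reparamSum h0 h2) (isTriangleMap_reparamSum h0' h2')
    (invOn_reparamSum h0 h2), ncard_toSet_rescaleHomeomorph _ _ _, fun C hC => ?_⟩
  rw [ends_rescaleHomeomorph, hC, reparamSum_zero_half hhalf]

theorem exists_homeomorph_zero_one_subset_of_zero_mem {C : SymmProd unitInterval n}
    (h2 : 2 ≤ C.toSet.ncard) (h0 : 0 ∈ C.toSet) :
    ∃ H : SymmProd unitInterval n ≃ₜ SymmProd unitInterval n,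
      {0, 1} ⊆ (H C).toSet ∧ (H C).toSet.ncard = C.toSet.ncard := by
  by_cases h1 : 1 ∈ C.toSet
  · exact ⟨Homeomorph.refl _, insert_subset h0 (singleton_subset_iff.2 h1), rfl⟩
  obtain ⟨x, hx, hx0⟩ := exists_ne_of_one_lt_ncard h2 0
  have hpos : 0 < C.upper := (unitInterval.pos_iff_ne_zero.2 hx0).trans_le (le_upper hx)
  have hlt : C.upper < 1 := unitInterval.lt_one_iff_ne_one.2 fun h => h1 (h ▸ C.upper_mem)
  let half : unitInterval := ⟨1 / 2, by norm_num, by norm_num⟩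
  obtain ⟨g, hg0, hg⟩ := exists_orderIso_unitInterval_fix_le_apply_eq hpos
    (show (0 : unitInterval) < half from show (0 : ℝ) < 1 / 2 by norm_num) hlt
    (show half < 1 from show (1 / 2 : ℝ) < 1 by norm_num)
  set C' := mapHomeomorph g.toHomeomorph C
  have hC' : C'.ends = (0, 1 / 2) := by
    have hzero : (0 : unitInterval) ∈ C'.toSet := ⟨0, h0, hg0 0 le_rfl⟩
    refine Prod.ext (le_antisymm (lower_le hzero) C'.lower.2.1) ?_
    change ((C'.upper : unitInterval) : ℝ) = 1 / 2
    rw [upper_mapHomeomorph, hg]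
  obtain ⟨H, hHcard, hH⟩ := exists_homeomorph_ends_eq_zero_one (n := n)
  exact ⟨(mapHomeomorph g.toHomeomorph).trans H, zero_one_subset_of_ends_eq (hH C' hC'),
    (hHcard C').trans (ncard_toSet_mapHomeomorph _ C)⟩

theorem exists_homeomorph_zero_one_subset {C : SymmProd unitInterval n} (h2 : 2 ≤ C.toSet.ncard)
    (hC : (C.toSet ∩ {0, 1}).Nonempty) :
    ∃ H : SymmProd unitInterval n ≃ₜ SymmProd unitInterval n,
      {0, 1} ⊆ (H C).toSet ∧ (H C).toSet.ncard = C.toSet.ncard := by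
  obtain ⟨x, hxC, rfl | rfl⟩ := hC
  · exact exists_homeomorph_zero_one_subset_of_zero_mem h2 hxC
  · set R := mapHomeomorph (n := n) unitInterval.symmHomeomorph
    have hRcard : (R C).toSet.ncard = C.toSet.ncard := ncard_toSet_mapHomeomorph _ C
    obtain ⟨H, hH, hHcard⟩ := exists_homeomorph_zero_one_subset_of_zero_mem (C := R C)
      (hRcard ▸ h2) ⟨1, hxC, unitInterval.symm_one⟩
    exact ⟨R.trans H, hH, hHcard.trans hRcard⟩

end SymmProd

theorem stmt7_general (n : ℕ) (A B : SymmProd unitInterval n)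
    (hcard : A.toSet.ncard = B.toSet.ncard) (h2 : 2 ≤ A.toSet.ncard)
    (hA : (A.toSet ∩ {0, 1}).Nonempty) (hB : (B.toSet ∩ {0, 1}).Nonempty) :
    ∃ h : SymmProd unitInterval n ≃ₜ SymmProd unitInterval n, h B = A := by
  obtain ⟨HA, hA01, hAcard⟩ := SymmProd.exists_homeomorph_zero_one_subset h2 hA
  obtain ⟨HB, hB01, hBcard⟩ := SymmProd.exists_homeomorph_zero_one_subset (hcard ▸ h2) hB
  obtain ⟨E, hE⟩ := SymmProd.exists_homeomorph_apply_eq_of_zero_one_subset hB01 hA01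
    (by rw [hBcard, hAcard, hcard])
  exact ⟨(HB.trans E).trans HA.symm, by simp [hE]⟩

theorem stmt7 (n : ℕ) (hn : 2 ≤ n) (A B : SymmProd unitInterval n)
    (hcard : A.toSet.ncard = B.toSet.ncard) (h2 : 2 ≤ A.toSet.ncard)
    (hA : (A.toSet ∩ {0, 1}).Nonempty) (hB : (B.toSet ∩ {0, 1}).Nonempty) :
    ∃ h : SymmProd unitInterval n ≃ₜ SymmProd unitInterval n, h B = A :=
  stmt7_general n A B hcard h2 hA hB
end
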